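/- arXiv:2211.16709 — 8 statements merged into one kernel-verified Lean document; each statement's English description precedes it below -/
import Mathlib

section
/- (Lemma 1) Let m be a positive integer and let a, b, c be complex numbers such that none of a, b, c, a+b is a negative integer. Then Σ_{i=1}^m 1/(Γ(i)·Γ(a+i)·Γ(m+1−i)·Γ(m+b+1−i)·(c+i)) = (1/(Γ(b+m)·Γ(c+m+1)·Γ(a+b+m))) · Σ_{i=1}^m Γ(c−i+m+1)·Γ(a+b−i+2m)/(Γ(m−i+1)·Γ(a−i+m+1)). -/
open Complex Finset

lemma Gamma_add_nat (w : ℂ) (n : ℕ) (hw : ∀ i : ℕ, i < n → w + i ≠ 0) :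
    Complex.Gamma (w + n) = Complex.Gamma w * ∏ i ∈ range n, (w + i) := by
  induction n with
  | zero => simp
  | succ n ih =>
    have h1 : w + (n+1 : ℕ) = (w + n) + 1 := by push_cast; ring
    rw [h1, Complex.Gamma_add_one _ (hw n (by omega)), prod_range_succ,
      ih (fun i hi => hw i (by omega))]
    ring

lemma Gamma_ne_zero_of_shift {z : ℂ} (hz : ∀ k : ℕ, z ≠ -(k + 1 : ℕ)) (n : ℕ) (hn : 1 ≤ n) :
    Complex.Gamma (z + n) ≠ 0 := by
  apply Complex.Gamma_ne_zero
  intro t h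
  apply hz (t + n - 1)
  have he : t + n - 1 + 1 = t + n := by omega
  rw [he]
  push_cast
  linear_combination h

lemma shift_ne_zero {z : ℂ} (hz : ∀ k : ℕ, z ≠ -(k + 1 : ℕ)) (n : ℕ) (hn : 1 ≤ n) :
    z + n ≠ 0 := by
  intro h
  apply hz (n - 1)
  have he : n - 1 + 1 = n := by omega
  rw [he]
  linear_combination h

lemma alt_sum_factorial (N : ℕ) (hN : 1 ≤ N) :
    ∑ k ∈ range (N+1), (-1:ℂ)^k / ((k.factorial : ℂ) * ((N-k).factorial : ℂ)) = 0 := by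
  have key : ∑ k ∈ range (N+1), ((-1:ℂ)^k * (N.choose k : ℂ)) = 0 := by
    have h := Int.alternating_sum_range_choose (n := N)
    rw [if_neg (by omega)] at h
    have h2 := congrArg (Int.cast : ℤ → ℂ) h
    push_cast at h2
    exact h2
  calc ∑ k ∈ range (N+1), (-1:ℂ)^k / ((k.factorial : ℂ) * ((N-k).factorial : ℂ))
      = ∑ k ∈ range (N+1), ((-1:ℂ)^k * (N.choose k : ℂ)) / (N.factorial : ℂ) := by
        refine sum_congr rfl fun k hk => ?_
        simp only [mem_range] at hk
        have h3 : (N.choose k : ℂ) * (k.factorial : ℂ) * ((N-k).factorial : ℂ)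
            = (N.factorial : ℂ) := by
          exact_mod_cast congrArg (Nat.cast : ℕ → ℂ)
            (Nat.choose_mul_factorial_mul_factorial (by omega : k ≤ N))
        have hk1 : (k.factorial : ℂ) ≠ 0 := by exact_mod_cast k.factorial_ne_zero
        have hk2 : ((N-k).factorial : ℂ) ≠ 0 := by exact_mod_cast (N-k).factorial_ne_zero
        have hk3 : (N.factorial : ℂ) ≠ 0 := by exact_mod_cast N.factorial_ne_zero
        field_simp
        linear_combination -h3
    _ = (∑ k ∈ range (N+1), ((-1:ℂ)^k * (N.choose k : ℂ))) / N.factorial := by rw [sum_div]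
    _ = 0 := by rw [key, zero_div]

lemma partial_fractions (n : ℕ) (z : ℂ) (hz : ∀ k : ℕ, k ≤ n → z + k ≠ 0) :
    (∏ k ∈ range (n+1), (z + k))⁻¹
      = ∑ k ∈ range (n+1), (-1:ℂ)^k / ((k.factorial : ℂ) * ((n-k).factorial : ℂ) * (z + k)) := by
  induction n with
  | zero => simp
  | succ n ih =>
    have hzn : ∀ k : ℕ, k ≤ n → z + k ≠ 0 := fun k hk => hz k (by omega)
    have hz1 : z + ((n : ℂ) + 1) ≠ 0 := by
      have := hz (n+1) le_rfl; push_cast at this; exact this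
    have step1 : (∏ k ∈ range (n+2), (z + k))⁻¹
        = (∑ k ∈ range (n+1), (-1:ℂ)^k / ((k.factorial : ℂ) * ((n-k).factorial : ℂ) * (z + k)))
          * ((z : ℂ) + ((n:ℂ)+1))⁻¹ := by
      rw [prod_range_succ, mul_inv, ih hzn]
      push_cast
      ring_nf
      rw [mul_comm]
      congr 1
      refine sum_congr rfl fun x _ => ?_
      ring
    rw [step1, sum_mul]
    have hterm : ∀ k ∈ range (n+1),
        (-1:ℂ)^k / ((k.factorial : ℂ) * ((n-k).factorial : ℂ) * (z + k)) * ((z:ℂ) + ((n:ℂ)+1))⁻¹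
        = (-1:ℂ)^k / ((k.factorial : ℂ) * ((n+1-k).factorial : ℂ) * (z + k))
          + ((-1:ℂ)^(k+1) / ((k.factorial : ℂ) * ((n+1-k).factorial : ℂ))) * ((z:ℂ) + ((n:ℂ)+1))⁻¹ := by
      intro k hk
      simp only [mem_range] at hk
      have hkn : k ≤ n := by omega
      have e1 : n + 1 - k = (n - k) + 1 := by omega
      have hzk : z + k ≠ 0 := hzn k hkn
      have hf1 : ((k.factorial : ℂ)) ≠ 0 := by exact_mod_cast k.factorial_ne_zero
      have hf2 : (((n-k).factorial : ℂ)) ≠ 0 := by exact_mod_cast (n-k).factorial_ne_zero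
      have hd : (n : ℂ) - k + 1 ≠ 0 := by
        have : ((n - k + 1 : ℕ) : ℂ) = (n : ℂ) - k + 1 := by
          push_cast [Nat.cast_sub hkn]; ring
        rw [← this]
        exact_mod_cast Nat.succ_ne_zero (n-k)
      have core : (z + (k:ℂ))⁻¹ * (z + ((n:ℂ)+1))⁻¹
          = ((n:ℂ) - k + 1)⁻¹ * (z + (k:ℂ))⁻¹ - ((n:ℂ) - k + 1)⁻¹ * (z + ((n:ℂ)+1))⁻¹ := by
        field_simp
        ring
      rw [e1, Nat.factorial_succ]
      push_cast [Nat.cast_sub hkn]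
      simp only [div_eq_mul_inv, mul_inv, pow_succ]
      linear_combination ((-1:ℂ)^k * ((k.factorial:ℂ))⁻¹ * (((n-k).factorial:ℂ))⁻¹) * core
    rw [sum_congr rfl hterm, sum_add_distrib, ← sum_mul]
    have hlast : (∑ k ∈ range (n+1), (-1:ℂ)^(k+1) / ((k.factorial : ℂ) * ((n+1-k).factorial : ℂ)))
        = (-1:ℂ)^(n+1) / (((n+1).factorial : ℂ)) := by
      have h0 := alt_sum_factorial (n+1) (by omega)
      rw [sum_range_succ, Nat.sub_self] at h0
      have h1 : ∑ k ∈ range (n+1), (-1:ℂ)^(k+1) / ((k.factorial : ℂ) * ((n+1-k).factorial : ℂ))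
          = - ∑ k ∈ range (n+1), (-1:ℂ)^k / ((k.factorial : ℂ) * ((n+1-k).factorial : ℂ)) := by
        rw [← sum_neg_distrib]
        refine sum_congr rfl fun k _ => ?_
        rw [pow_succ]
        ring
      rw [h1]
      simp only [Nat.factorial_zero, Nat.cast_one, mul_one] at h0
      linear_combination -h0
    rw [hlast, sum_range_succ (n := n+1)]
    congr 1
    rw [Nat.sub_self]
    simp only [Nat.factorial_zero, Nat.cast_one, mul_one]
    push_cast
    field_simp

lemma fwdDiff_gamma_ratio (a s : ℂ)
    (ha : ∀ t : ℕ, a + 1 + t ≠ 0)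
    (hg : ∀ t : ℕ, Complex.Gamma (a + 1 + t) ≠ 0)
    (hs : ∀ t : ℕ, a + 1 + s + t ≠ 0)
    (n : ℕ) :
    ∀ t : ℕ, (fwdDiff (1:ℂ))^[n] (fun x => Complex.Gamma (x + s) / Complex.Gamma x) ((a+1) + t)
      = (∏ i ∈ range n, (s - i)) * Complex.Gamma ((a+1) + t + s)
          / Complex.Gamma ((a+1) + t + n) := by
  induction n with
  | zero => intro t; simp
  | succ n ih =>
    intro t
    rw [Function.iterate_succ_apply']
    show fwdDiff (1:ℂ) _ _ = _
    rw [fwdDiff]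
    have h1 : (a+1) + (t:ℂ) + 1 = (a+1) + ((t+1 : ℕ) : ℂ) := by push_cast; ring
    rw [h1, ih (t+1), ih t]
    have e1 : (a+1) + ((t+1:ℕ):ℂ) + s = ((a+1) + t + s) + 1 := by push_cast; ring
    have e2 : (a+1) + ((t+1:ℕ):ℂ) + (n:ℂ) = ((a+1) + t + n) + 1 := by push_cast; ring
    have e3 : (a+1) + (t:ℂ) + ((n+1:ℕ):ℂ) = ((a+1) + t + n) + 1 := by push_cast; ring
    have hxs : (a+1) + (t:ℂ) + s ≠ 0 := by
      have := hs t; intro h; apply this; linear_combination h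
    have hxn : (a+1) + (t:ℂ) + (n:ℂ) ≠ 0 := by
      have := ha (t+n); push_cast at this; intro h; apply this; linear_combination h
    have hgn : Complex.Gamma ((a+1) + (t:ℂ) + (n:ℂ)) ≠ 0 := by
      have := hg (t+n); push_cast at this
      convert this using 2
      ring
    rw [e1, e2, e3, Complex.Gamma_add_one _ hxs, Complex.Gamma_add_one _ hxn, prod_range_succ]
    field_simp
    ring

lemma gamma_vandermonde (a s : ℂ)
    (ha : ∀ t : ℕ, a + 1 + t ≠ 0)
    (hg : ∀ t : ℕ, Complex.Gamma (a + 1 + t) ≠ 0)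
    (hs : ∀ t : ℕ, a + 1 + s + t ≠ 0)
    (n : ℕ) :
    ∑ k ∈ range (n+1), ((-1:ℂ)^(n-k) * (n.choose k : ℂ))
        * (Complex.Gamma ((a+1) + k + s) / Complex.Gamma ((a+1) + k))
      = (∏ i ∈ range n, (s - i)) * Complex.Gamma ((a+1) + s) / Complex.Gamma ((a+1) + n) := by
  have h := fwdDiff_iter_eq_sum_shift (1:ℂ) (fun x => Complex.Gamma (x + s) / Complex.Gamma x) n (a+1)
  have h2 := fwdDiff_gamma_ratio a s ha hg hs n 0
  simp only [Nat.cast_zero, add_zero] at h2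
  rw [h] at h2
  simp only [nsmul_eq_mul, mul_one, zsmul_eq_mul, add_zero] at h2
  rw [← h2]
  refine sum_congr rfl fun k hk => ?_
  push_cast
  ring
lemma innerSumIdentity (m k : ℕ) (hk1 : 1 ≤ k) (hkm : k ≤ m) (a b : ℂ)
    (ha : ∀ t : ℕ, a ≠ -(t + 1 : ℕ)) (hb : ∀ t : ℕ, b ≠ -(t + 1 : ℕ))
    (hab : ∀ t : ℕ, a + b ≠ -(t + 1 : ℕ)) :
    ∑ j ∈ Icc 1 k, (-1:ℂ)^(k-j) * Complex.Gamma (a + b + m - 1 + j)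
        / (((k-j).factorial : ℂ) * Complex.Gamma (j:ℂ) * Complex.Gamma (a + j))
      = Complex.Gamma (b + m) * Complex.Gamma (a + b + m)
        / (Complex.Gamma (k:ℂ) * Complex.Gamma (a + k) * Complex.Gamma ((m:ℂ) + b + 1 - k)) := by
  have hm : 1 ≤ m := le_trans hk1 hkm
  -- hypotheses for gamma_vandermonde
  have haT : ∀ t : ℕ, a + 1 + t ≠ 0 := by
    intro t h
    apply ha t
    push_cast
    linear_combination h
  have hgT : ∀ t : ℕ, Complex.Gamma (a + 1 + t) ≠ 0 := by
    intro t
    have := Gamma_ne_zero_of_shift ha (t+1) (by omega)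
    convert this using 2
    push_cast
    ring
  have hsT : ∀ t : ℕ, a + 1 + (b + m - 1) + t ≠ 0 := by
    intro t h
    have := shift_ne_zero hab (m + t) (by omega)
    apply this
    push_cast
    linear_combination h
  have key := gamma_vandermonde a (b + m - 1) haT hgT hsT (k-1)
  rw [show k - 1 + 1 = k from by omega] at key
  -- transform LHS into (1/(k-1)!) * key-LHS
  have hIcc : Icc 1 k = Ico 1 (k+1) := by rw [Finset.Ico_add_one_right_eq_Icc]
  rw [hIcc, Finset.sum_Ico_eq_sum_range]
  rw [show k + 1 - 1 = k from rfl]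
  have hterm : ∀ t ∈ range k,
      (-1:ℂ)^(k-(1+t)) * Complex.Gamma (a + b + m - 1 + ((1+t : ℕ):ℂ))
          / ((((k-(1+t)).factorial : ℕ) : ℂ) * Complex.Gamma (((1+t:ℕ)):ℂ)
            * Complex.Gamma (a + ((1+t:ℕ):ℂ)))
        = (((k-1).factorial : ℂ))⁻¹ * (((-1:ℂ)^(k-1-t) * ((k-1).choose t : ℂ))
            * (Complex.Gamma ((a+1) + t + (b + m - 1)) / Complex.Gamma ((a+1) + t))) := by
    intro t ht
    simp only [mem_range] at ht
    have htk : t ≤ k - 1 := by omega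
    have e1 : k - (1+t) = k - 1 - t := by omega
    have e2 : ((1+t : ℕ):ℂ) = (t:ℂ) + 1 := by push_cast; ring
    have e3 : a + b + (m:ℂ) - 1 + ((t:ℂ)+1) = (a+1) + t + (b + m - 1) := by ring
    have e4 : a + ((t:ℂ)+1) = (a+1) + t := by ring
    rw [e1, e2, e3, e4, Complex.Gamma_nat_eq_factorial]
    have hch : (((k-1).choose t : ℂ)) * (t.factorial : ℂ) * (((k-1-t).factorial : ℂ))
        = (((k-1).factorial : ℂ)) := by
      exact_mod_cast congrArg (Nat.cast : ℕ → ℂ)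
        (Nat.choose_mul_factorial_mul_factorial htk)
    have h1 : ((t.factorial : ℕ) : ℂ) ≠ 0 := by exact_mod_cast t.factorial_ne_zero
    have h2 : (((k-1-t).factorial : ℕ) : ℂ) ≠ 0 := by exact_mod_cast (k-1-t).factorial_ne_zero
    have h3 : (((k-1).factorial : ℕ) : ℂ) ≠ 0 := by exact_mod_cast (k-1).factorial_ne_zero
    have h4 : Complex.Gamma ((a+1) + t) ≠ 0 := hgT t
    field_simp
    linear_combination (-Complex.Gamma ((a+1) + t + (b + m - 1))) * hch
  rw [sum_congr rfl hterm, ← mul_sum, key]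
  -- now handle the RHS
  have hGk : Complex.Gamma (k:ℂ) = (((k-1).factorial : ℕ) : ℂ) := by
    rw [show ((k:ℕ):ℂ) = ((k-1 : ℕ):ℂ) + 1 from by push_cast [Nat.cast_sub hk1]; ring,
      Complex.Gamma_nat_eq_factorial]
  have e5 : (a+1) + (b + (m:ℂ) - 1) = a + b + m := by ring
  have e6 : (a+1) + ((k-1 : ℕ):ℂ) = a + k := by push_cast [Nat.cast_sub hk1]; ring
  rw [e5, e6] at key ⊢
  -- product = Gamma(b+m)/Gamma(m+b+1-k)
  have hw : ∀ i : ℕ, i < k - 1 → ((m:ℂ) + b + 1 - k) + i ≠ 0 := by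
    intro i hi h
    apply hb (m + i - k)
    have : ((m + i - k + 1 : ℕ) : ℂ) = (m:ℂ) + i - k + 1 := by
      push_cast [Nat.cast_sub (show k ≤ m + i by omega)]; ring
    rw [this]
    linear_combination h
  have hprod := Gamma_add_nat ((m:ℂ) + b + 1 - k) (k-1) hw
  rw [show (m:ℂ) + b + 1 - k + ((k-1:ℕ):ℂ) = b + m from by
    push_cast [Nat.cast_sub hk1]; ring] at hprod
  have hrefl : ∏ i ∈ range (k-1), (b + (m:ℂ) - 1 - i)
      = ∏ i ∈ range (k-1), (((m:ℂ) + b + 1 - k) + i) := by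
    rw [← prod_range_reflect]
    refine prod_congr rfl fun i hi => ?_
    simp only [mem_range] at hi
    rw [show k - 1 - 1 - i = k - (i+2) from by omega]
    push_cast [Nat.cast_sub (show i + 2 ≤ k by omega), Nat.cast_sub hk1]
    ring
  -- nonvanishing facts
  have hGmbk : Complex.Gamma ((m:ℂ) + b + 1 - k) ≠ 0 := by
    have := Gamma_ne_zero_of_shift hb (m + 1 - k) (by omega)
    convert this using 2
    push_cast [Nat.cast_sub (show k ≤ m + 1 by omega)]
    ring
  have hGak : Complex.Gamma (a + k) ≠ 0 := Gamma_ne_zero_of_shift ha k hk1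
  have h3 : (((k-1).factorial : ℕ) : ℂ) ≠ 0 := by exact_mod_cast (k-1).factorial_ne_zero
  rw [hGk, hrefl, hprod]
  field_simp

lemma Gamma_nat_ne_zero (j : ℕ) (hj : 1 ≤ j) : Complex.Gamma (j:ℂ) ≠ 0 := by
  rw [show ((j:ℕ):ℂ) = ((j-1:ℕ):ℂ) + 1 from by push_cast [Nat.cast_sub hj]; ring,
    Complex.Gamma_nat_eq_factorial]
  exact_mod_cast (j-1).factorial_ne_zero

theorem lemma1_sum_identity (m : ℕ) (hm : 1 ≤ m) (a b c : ℂ)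
    (ha : ∀ k : ℕ, a ≠ -(k + 1 : ℕ)) (hb : ∀ k : ℕ, b ≠ -(k + 1 : ℕ))
    (hc : ∀ k : ℕ, c ≠ -(k + 1 : ℕ)) (hab : ∀ k : ℕ, a + b ≠ -(k + 1 : ℕ)) :
    ∑ i ∈ Finset.Icc 1 m,
        1 / (Complex.Gamma (i : ℂ) * Complex.Gamma (a + i) * Complex.Gamma ((m : ℂ) + 1 - i)
          * Complex.Gamma ((m : ℂ) + b + 1 - i) * (c + i)) =
      (1 / (Complex.Gamma (b + m) * Complex.Gamma (c + m + 1) * Complex.Gamma (a + b + m))) *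
        ∑ i ∈ Finset.Icc 1 m,
          Complex.Gamma (c - i + m + 1) * Complex.Gamma (a + b - i + 2 * m)
            / (Complex.Gamma ((m : ℂ) - i + 1) * Complex.Gamma (a - i + m + 1)) := by
  have hGbm : Complex.Gamma (b + m) ≠ 0 := Gamma_ne_zero_of_shift hb m hm
  have hGabm : Complex.Gamma (a + b + m) ≠ 0 := Gamma_ne_zero_of_shift hab m hm
  have hGcm : Complex.Gamma (c + m + 1) ≠ 0 := by
    have := Gamma_ne_zero_of_shift hc (m+1) (by omega)
    convert this using 2
    push_cast; ring
  -- Step A : reflect the RHS sum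
  have stepA : ∑ i ∈ Icc 1 m,
        Complex.Gamma (c - i + m + 1) * Complex.Gamma (a + b - i + 2 * m)
          / (Complex.Gamma ((m : ℂ) - i + 1) * Complex.Gamma (a - i + m + 1))
      = ∑ j ∈ Icc 1 m, Complex.Gamma (c + j) * Complex.Gamma (a + b + (m:ℂ) - 1 + j)
          / (Complex.Gamma (j:ℂ) * Complex.Gamma (a + j)) := by
    refine sum_nbij' (fun i => m + 1 - i) (fun j => m + 1 - j) ?_ ?_ ?_ ?_ ?_
    · intro i hi; simp only [mem_Icc] at hi ⊢; omega
    · intro j hj; simp only [mem_Icc] at hj ⊢; omega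
    · intro i hi; simp only [mem_Icc] at hi; show m + 1 - (m + 1 - i) = i; omega
    · intro j hj; simp only [mem_Icc] at hj; show m + 1 - (m + 1 - j) = j; omega
    · intro i hi; simp only [mem_Icc] at hi
      have hc1 : ((m + 1 - i : ℕ) : ℂ) = (m:ℂ) + 1 - i := by
        push_cast [Nat.cast_sub (show i ≤ m + 1 by omega)]; ring
      rw [hc1,
        show c + ((m:ℂ) + 1 - i) = c - i + m + 1 from by ring,
        show a + b + (m:ℂ) - 1 + ((m:ℂ) + 1 - i) = a + b - i + 2 * m from by ring,
        show a + ((m:ℂ) + 1 - i) = a - i + m + 1 from by ring,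
        show ((m:ℂ) + 1 - i) = (m:ℂ) - i + 1 from by ring]
  rw [stepA, mul_sum]
  -- Step C : expand each term into a double sum
  have stepC : ∀ j ∈ Icc 1 m,
      1 / (Complex.Gamma (b + m) * Complex.Gamma (c + m + 1) * Complex.Gamma (a + b + m))
          * (Complex.Gamma (c + j) * Complex.Gamma (a + b + (m:ℂ) - 1 + j)
            / (Complex.Gamma (j:ℂ) * Complex.Gamma (a + j)))
        = ∑ k ∈ Icc j m,
            (-1:ℂ)^(k-j) * Complex.Gamma (a + b + (m:ℂ) - 1 + j)
                / (((k-j).factorial : ℂ) * Complex.Gamma (j:ℂ) * Complex.Gamma (a + j))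
              * (1 / (((m-k).factorial : ℂ) * (c + k) * Complex.Gamma (b + m)
                  * Complex.Gamma (a + b + m))) := by
    intro j hj
    simp only [mem_Icc] at hj
    -- the Gamma-ratio expansion
    have hw : ∀ i : ℕ, i < m + 1 - j → (c + (j:ℂ)) + i ≠ 0 := by
      intro i _ h
      apply shift_ne_zero hc (j + i) (by omega)
      push_cast
      linear_combination h
    have hexp := Gamma_add_nat (c + (j:ℂ)) (m + 1 - j) hw
    rw [show (c + (j:ℂ)) + ((m + 1 - j : ℕ) : ℂ) = c + m + 1 from by
      push_cast [Nat.cast_sub (show j ≤ m + 1 by omega)]; ring] at hexp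
    have hGcj : Complex.Gamma (c + (j:ℂ)) ≠ 0 := Gamma_ne_zero_of_shift hc j hj.1
    have stepB : Complex.Gamma (c + (j:ℂ)) / Complex.Gamma (c + m + 1)
        = ∑ t ∈ range ((m - j) + 1),
            (-1:ℂ)^t / ((t.factorial : ℂ) * ((m-j-t).factorial : ℂ) * ((c + (j:ℂ)) + t)) := by
      rw [hexp, show m + 1 - j = (m - j) + 1 from by omega, div_mul_eq_div_div, div_self hGcj,
        one_div, partial_fractions (m-j) (c + (j:ℂ)) (fun t ht => hw t (by omega))]
    calc 1 / (Complex.Gamma (b + m) * Complex.Gamma (c + m + 1) * Complex.Gamma (a + b + m))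
          * (Complex.Gamma (c + j) * Complex.Gamma (a + b + (m:ℂ) - 1 + j)
            / (Complex.Gamma (j:ℂ) * Complex.Gamma (a + j)))
        = (Complex.Gamma (c + (j:ℂ)) / Complex.Gamma (c + m + 1))
            * (Complex.Gamma (a + b + (m:ℂ) - 1 + j)
              / (Complex.Gamma (j:ℂ) * Complex.Gamma (a + j) * Complex.Gamma (b + m)
                * Complex.Gamma (a + b + m))) := by ring
      _ = ∑ t ∈ range ((m - j) + 1),
            (-1:ℂ)^t / ((t.factorial : ℂ) * ((m-j-t).factorial : ℂ) * ((c + (j:ℂ)) + t))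
              * (Complex.Gamma (a + b + (m:ℂ) - 1 + j)
                / (Complex.Gamma (j:ℂ) * Complex.Gamma (a + j) * Complex.Gamma (b + m)
                  * Complex.Gamma (a + b + m))) := by rw [stepB, sum_mul]
      _ = _ := by
          refine sum_nbij' (fun t => j + t) (fun k => k - j) ?_ ?_ ?_ ?_ ?_
          · intro t ht; simp only [mem_range] at ht; simp only [mem_Icc]; omega
          · intro k hk; simp only [mem_Icc] at hk; simp only [mem_range]; omega
          · intro t ht; simp only [mem_range] at ht; show j + t - j = t; omega
          · intro k hk; simp only [mem_Icc] at hk; show j + (k - j) = k; omega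
          · intro t ht
            simp only [mem_range] at ht
            rw [show j + t - j = t from by omega, show m - (j + t) = m - j - t from by omega,
              show c + ((j + t : ℕ) : ℂ) = c + (j:ℂ) + t from by push_cast; ring]
            have hf1 : ((t.factorial : ℕ) : ℂ) ≠ 0 := by exact_mod_cast t.factorial_ne_zero
            have hf2 : (((m-j-t).factorial : ℕ) : ℂ) ≠ 0 := by
              exact_mod_cast (m-j-t).factorial_ne_zero
            have hX : (c + (j:ℂ)) + t ≠ 0 := hw t (by omega)
            have hGj : Complex.Gamma (j:ℂ) ≠ 0 := Gamma_nat_ne_zero j hj.1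
            have hGaj : Complex.Gamma (a + j) ≠ 0 := Gamma_ne_zero_of_shift ha j hj.1
            have hD1 : ((t.factorial : ℕ) : ℂ) * (((m-j-t).factorial : ℕ) : ℂ) * (c + (j:ℂ) + t)
                * (Complex.Gamma (j:ℂ) * Complex.Gamma (a + j) * Complex.Gamma (b + m)
                  * Complex.Gamma (a + b + m)) ≠ 0 :=
              mul_ne_zero (mul_ne_zero (mul_ne_zero hf1 hf2) hX)
                (mul_ne_zero (mul_ne_zero (mul_ne_zero hGj hGaj) hGbm) hGabm)
            have hD2 : ((t.factorial : ℕ) : ℂ) * Complex.Gamma (j:ℂ) * Complex.Gamma (a + j)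
                * ((((m-j-t).factorial : ℕ) : ℂ) * (c + (j:ℂ) + t) * Complex.Gamma (b + m)
                  * Complex.Gamma (a + b + m)) ≠ 0 := by
              exact mul_ne_zero (mul_ne_zero (mul_ne_zero hf1 hGj) hGaj)
                (mul_ne_zero (mul_ne_zero (mul_ne_zero hf2 hX) hGbm) hGabm)
            rw [div_mul_div_comm, div_mul_div_comm, div_eq_div_iff hD1 hD2]
            ring
  rw [sum_congr rfl stepC]
  rw [Finset.sum_comm' (s := Icc 1 m) (t := fun j => Icc j m) (t' := Icc 1 m)
      (s' := fun k => Icc 1 k) (fun x y => by simp only [Finset.mem_Icc]; omega)]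
  refine sum_congr rfl fun k hk => ?_
  simp only [mem_Icc] at hk
  rw [← sum_mul, innerSumIdentity m k hk.1 hk.2 a b ha hb hab]
  have hGk : Complex.Gamma (k:ℂ) = (((k-1).factorial : ℕ) : ℂ) := by
    rw [show ((k:ℕ):ℂ) = ((k-1 : ℕ):ℂ) + 1 from by push_cast [Nat.cast_sub hk.1]; ring,
      Complex.Gamma_nat_eq_factorial]
  have hGkne : Complex.Gamma (k:ℂ) ≠ 0 := by
    rw [hGk]; exact_mod_cast (k-1).factorial_ne_zero
  have hck : c + (k:ℂ) ≠ 0 := shift_ne_zero hc k hk.1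
  have hGak : Complex.Gamma (a + k) ≠ 0 := Gamma_ne_zero_of_shift ha k hk.1
  have hGmbk : Complex.Gamma ((m:ℂ) + b + 1 - k) ≠ 0 := by
    have := Gamma_ne_zero_of_shift hb (m + 1 - k) (by omega)
    convert this using 2
    push_cast [Nat.cast_sub (show k ≤ m + 1 by omega)]
    ring
  have hfac : Complex.Gamma ((m:ℂ) + 1 - k) = (((m-k).factorial : ℕ) : ℂ) := by
    rw [show (m:ℂ) + 1 - k = ((m-k:ℕ):ℂ) + 1 from by push_cast [Nat.cast_sub hk.2]; ring,
      Complex.Gamma_nat_eq_factorial]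
  rw [hfac]
  have hfne : (((m-k).factorial : ℕ) : ℂ) ≠ 0 := by exact_mod_cast (m-k).factorial_ne_zero
  have hE1 : Complex.Gamma (k:ℂ) * Complex.Gamma (a + k) * (((m-k).factorial : ℕ) : ℂ)
      * Complex.Gamma ((m:ℂ) + b + 1 - k) * (c + k) ≠ 0 :=
    mul_ne_zero (mul_ne_zero (mul_ne_zero (mul_ne_zero hGkne hGak) hfne) hGmbk) hck
  have hE2 : Complex.Gamma (k:ℂ) * Complex.Gamma (a + k) * Complex.Gamma ((m:ℂ) + b + 1 - k)
      * ((((m-k).factorial : ℕ) : ℂ) * (c + k) * Complex.Gamma (b + m)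
        * Complex.Gamma (a + b + m)) ≠ 0 :=
    mul_ne_zero (mul_ne_zero (mul_ne_zero hGkne hGak) hGmbk)
      (mul_ne_zero (mul_ne_zero (mul_ne_zero hfne hck) hGbm) hGabm)
  rw [div_mul_div_comm, div_eq_div_iff hE1 hE2]
  ring
end

section
/- (Lemma 2) Let m and c be positive integers and let a, b be complex numbers such that none of a, b, a+b is a negative integer. Then Σ_{i=1}^m 1/(Γ(c+i)·Γ(a+i)·Γ(m+1−i)·Γ(m+b+1−i)) = (1/(Γ(m+b)·Γ(m+a+b)·Γ(c)·Γ(m+c))) · Σ_{i=1}^m Γ(m+a+b+i−1)·Γ(m+c−i)/(Γ(a+i)·Γ(m−i+1)). -/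
open Complex Finset Polynomial

noncomputable def dd (x : ℂ) (n : ℕ) : ℂ := (descPochhammer ℂ n).eval x
noncomputable def aa (x : ℂ) (n : ℕ) : ℂ := (ascPochhammer ℂ n).eval x

lemma dd_zero (x : ℂ) : dd x 0 = 1 := by simp [dd]

lemma dd_eq_aa (x : ℂ) (n : ℕ) : dd x n = aa (x - n + 1) n :=
  descPochhammer_eval_eq_ascPochhammer (R := ℂ) x n

lemma dd_add (x : ℂ) (n p : ℕ) : dd x (n + p) = dd x n * dd (x - n) p := by
  have h := congrArg (Polynomial.eval x) (descPochhammer_mul (R := ℂ) n p)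
  simpa [dd, eval_mul, eval_comp] using h.symm

lemma dd_neg (x : ℂ) (n : ℕ) : dd (-x) n = (-1) ^ n * aa x n := by
  have h : aa x n = (-1 : ℂ) ^ n * dd (-x) n := by
    simpa [aa, dd] using ascPochhammer_eval_neg_eq_descPochhammer (R := ℂ) (-x) n
  rw [h, ← mul_assoc, ← pow_add, Even.neg_one_pow ⟨n, rfl⟩, one_mul]

lemma smeval_dd (n : ℕ) (x : ℂ) : (descPochhammer ℤ n).smeval x = dd x n := by
  rw [← aeval_eq_smeval, aeval_def, ← eval_map, descPochhammer_map, dd]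

lemma descV (k : ℕ) (x y : ℂ) :
    dd (x + y) k = ∑ j ∈ range (k + 1),
      (Nat.choose k j : ℂ) * dd x j * dd y (k - j) := by
  have h := Ring.descPochhammer_smeval_add (R := ℂ) (r := x) (s := y) k (Commute.all x y)
  rw [smeval_dd] at h
  rw [h, Finset.Nat.sum_antidiagonal_eq_sum_range_succ_mk]
  refine Finset.sum_congr rfl fun j hj => ?_
  rw [smeval_dd, smeval_dd, mul_assoc]

lemma ascV (k : ℕ) (x y : ℂ) :
    aa (x + y) k = ∑ j ∈ range (k + 1),
      (Nat.choose k j : ℂ) * aa x j * aa y (k - j) := by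
  have h1 : dd (-(x + y)) k = (-1) ^ k * aa (x + y) k := dd_neg _ _
  have h2 : dd (-(x + y)) k = ∑ j ∈ range (k + 1),
      (Nat.choose k j : ℂ) * dd (-x) j * dd (-y) (k - j) := by
    rw [show (-(x+y)) = -x + -y by ring, descV]
  have h3 : ∀ j ∈ range (k+1), (Nat.choose k j : ℂ) * dd (-x) j * dd (-y) (k - j)
      = (-1) ^ k * ((Nat.choose k j : ℂ) * aa x j * aa y (k - j)) := by
    intro j hj
    have hjk : j ≤ k := Nat.lt_succ_iff.mp (mem_range.mp hj)
    rw [dd_neg, dd_neg]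
    rw [show (-1:ℂ)^k = (-1:ℂ)^j * (-1:ℂ)^(k-j) from by
      rw [← pow_add, Nat.add_sub_cancel' hjk]]
    ring
  rw [Finset.sum_congr rfl h3, ← Finset.mul_sum] at h2
  rw [h1] at h2
  exact mul_left_cancel₀ (pow_ne_zero k (by norm_num)) h2

lemma Gamma_aa (n : ℕ) (z : ℂ) (h : ∀ t : ℕ, t < n → z + t ≠ 0) :
    Complex.Gamma (z + n) = Complex.Gamma z * aa z n := by
  induction n with
  | zero => simp [aa]
  | succ n ih =>
    have h1 : z + ((n+1 : ℕ) : ℂ) = (z + n) + 1 := by push_cast; ring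
    have h2 : z + (n : ℂ) ≠ 0 := h n (Nat.lt_succ_self n)
    rw [h1, Complex.Gamma_add_one _ h2, ih (fun t ht => h t (Nat.lt_succ_of_lt ht))]
    have h3 : aa z (n + 1) = aa z n * (z + n) := ascPochhammer_succ_eval n z
    rw [h3]; ring

lemma nat_aux (N j t : ℕ) (ht : t ≤ N) :
    Nat.choose (j + t) j * Nat.descFactorial N t
      = Nat.choose N t * Nat.descFactorial (j + t) t := by
  rw [Nat.descFactorial_eq_factorial_mul_choose, Nat.descFactorial_eq_factorial_mul_choose]
  have hsym : (j + t).choose t = (j + t).choose j := by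
    have := Nat.choose_symm (n := j + t) (k := j) (Nat.le_add_right j t)
    simpa [Nat.add_sub_cancel_left] using this
  rw [hsym]; ring

lemma dd_nat (N t : ℕ) : dd ((N : ℕ) : ℂ) t = (Nat.descFactorial N t : ℂ) := by
  simpa [dd] using descPochhammer_eval_eq_descFactorial (R := ℂ) N t

lemma starstar (N j : ℕ) (x : ℂ) :
    ∑ t ∈ range (N + 1), (Nat.choose (j + t) j : ℂ) * dd ((N : ℕ) : ℂ) t
        * dd (x - j - t - 1) (N - t) = dd x N := by
  have key : dd x N = aa (((j : ℂ) + 1) + (x - j - N)) N := by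
    rw [dd_eq_aa]; congr 1; ring
  rw [key, ascV]
  refine Finset.sum_congr rfl fun t htm => ?_
  have ht : t ≤ N := Nat.lt_succ_iff.mp (mem_range.mp htm)
  have e1 : dd (x - j - t - 1) (N - t) = aa (x - j - N) (N - t) := by
    rw [dd_eq_aa]; congr 1
    rw [Nat.cast_sub ht]; ring
  have e2 : (Nat.choose (j + t) j : ℂ) * dd ((N : ℕ) : ℂ) t
      = (Nat.choose N t : ℂ) * aa ((j : ℂ) + 1) t := by
    have e3 : aa ((j : ℂ) + 1) t = dd (((j + t : ℕ) : ℕ) : ℂ) t := by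
      rw [dd_eq_aa]; congr 1; push_cast; ring
    rw [e3, dd_nat, dd_nat]
    norm_cast
    exact nat_aux N j t ht
  rw [e1, ← e2]

lemma star (M j : ℕ) (hj : j ≤ M) (C : ℂ) :
    ∑ k ∈ range (M + 1), (Nat.choose k j : ℂ) * dd ((M : ℕ) : ℂ) k
        * dd (C - k - 1) (M - k)
      = dd ((M : ℕ) : ℂ) j * dd C (M - j) := by
  have hsplit : M + 1 = j + (M - j + 1) := by omega
  rw [show range (M+1) = range (j + (M - j + 1)) from by rw [← hsplit]]
  rw [Finset.sum_range_add]
  have hz : ∀ k ∈ range j, (Nat.choose k j : ℂ) * dd ((M : ℕ) : ℂ) k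
      * dd (C - k - 1) (M - k) = 0 := by
    intro k hk
    rw [Nat.choose_eq_zero_of_lt (mem_range.mp hk)]
    simp
  rw [Finset.sum_congr rfl hz, Finset.sum_const_zero, zero_add]
  have hterm : ∀ t ∈ range (M - j + 1),
      (Nat.choose (j + t) j : ℂ) * dd ((M : ℕ) : ℂ) (j + t)
        * dd (C - ((j + t : ℕ) : ℂ) - 1) (M - (j + t))
      = dd ((M : ℕ) : ℂ) j * ((Nat.choose (j + t) j : ℂ)
          * dd (((M - j : ℕ) : ℕ) : ℂ) t * dd ((C - j) - t - 1) ((M - j) - t)) := by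
    intro t htm
    have h1 : dd ((M : ℕ) : ℂ) (j + t) = dd ((M : ℕ) : ℂ) j * dd (((M - j : ℕ) : ℕ) : ℂ) t := by
      rw [dd_add]; congr 2; rw [Nat.cast_sub hj]
    have h2 : M - (j + t) = (M - j) - t := by omega
    have h3 : C - ((j + t : ℕ) : ℂ) - 1 = (C - j) - t - 1 := by push_cast; ring
    rw [h1, h2, h3]; ring
  rw [Finset.sum_congr rfl hterm, ← Finset.mul_sum, starstar (M - j) j C]

lemma genB (M : ℕ) (A B C : ℂ) :
    ∑ k ∈ range (M + 1), dd ((M : ℕ) : ℂ) k * dd A (M - k) * dd B k * dd C (M - k)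
      = ∑ k ∈ range (M + 1), dd ((M : ℕ) : ℂ) k * dd A (M - k)
          * dd (A + B - M + k) k * dd (C - k - 1) (M - k) := by
  have step1 : ∀ k ∈ range (M + 1),
      dd ((M : ℕ) : ℂ) k * dd A (M - k) * dd (A + B - M + k) k * dd (C - k - 1) (M - k)
      = ∑ j ∈ range (M + 1), (Nat.choose k j : ℂ) * dd ((M : ℕ) : ℂ) k * dd B j
          * dd A (M - j) * dd (C - k - 1) (M - k) := by
    intro k hk
    have hkM : k ≤ M := Nat.lt_succ_iff.mp (mem_range.mp hk)
    have hV : dd (A + B - M + k) k = ∑ j ∈ range (k + 1),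
        (Nat.choose k j : ℂ) * dd B j * dd (A - M + k) (k - j) := by
      rw [show A + B - (M : ℂ) + k = B + (A - M + k) by ring, descV]
    rw [hV, Finset.mul_sum, Finset.sum_mul]
    rw [Finset.sum_subset (Finset.range_subset_range.mpr (by omega : k + 1 ≤ M + 1))]
    · refine Finset.sum_congr rfl fun j hj => ?_
      by_cases hjk : j ≤ k
      case neg =>
        rw [Nat.choose_eq_zero_of_lt (by omega)]
        push_cast; ring
      have hcomb : dd A (M - k) * dd (A - M + k) (k - j) = dd A (M - j) := by
        have : dd A ((M - k) + (k - j)) = dd A (M - k) * dd (A - ((M - k : ℕ) : ℂ)) (k - j) :=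
          dd_add A (M - k) (k - j)
        rw [show (M - k) + (k - j) = M - j from by omega] at this
        rw [this]; congr 2
        rw [Nat.cast_sub hkM]; ring
      calc dd ((M : ℕ) : ℂ) k * dd A (M - k) * ((Nat.choose k j : ℂ) * dd B j
              * dd (A - M + k) (k - j)) * dd (C - k - 1) (M - k)
          = (Nat.choose k j : ℂ) * dd ((M : ℕ) : ℂ) k * dd B j
              * (dd A (M - k) * dd (A - M + k) (k - j)) * dd (C - k - 1) (M - k) := by ring
        _ = (Nat.choose k j : ℂ) * dd ((M : ℕ) : ℂ) k * dd B j
              * dd A (M - j) * dd (C - k - 1) (M - k) := by rw [hcomb]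
    · intro j hjm hjk
      have : k < j := by
        simp only [mem_range] at hjm hjk; omega
      rw [Nat.choose_eq_zero_of_lt this]
      push_cast; ring
  rw [Finset.sum_congr rfl step1, Finset.sum_comm]
  refine Finset.sum_congr rfl fun j hj => ?_
  have hjM : j ≤ M := Nat.lt_succ_iff.mp (mem_range.mp hj)
  have inner : ∑ k ∈ range (M + 1), (Nat.choose k j : ℂ) * dd ((M : ℕ) : ℂ) k * dd B j
      * dd A (M - j) * dd (C - k - 1) (M - k)
      = (dd B j * dd A (M - j)) * ∑ k ∈ range (M + 1),
          (Nat.choose k j : ℂ) * dd ((M : ℕ) : ℂ) k * dd (C - k - 1) (M - k) := by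
    rw [Finset.mul_sum]
    exact Finset.sum_congr rfl fun k _ => by ring
  rw [inner, star M j hjM C]
  ring

lemma zshift_ne (z : ℂ) (hz : ∀ k : ℕ, z ≠ -((k + 1 : ℕ) : ℂ)) (r : ℕ) (hr : 1 ≤ r) :
    z + (r : ℂ) ≠ 0 := by
  intro h0
  apply hz (r - 1)
  have e : ((r - 1 + 1 : ℕ) : ℂ) = (r : ℂ) := by rw [show r - 1 + 1 = r from by omega]
  rw [e]
  linear_combination h0

lemma Gne' (z : ℂ) (hz : ∀ k : ℕ, z ≠ -((k + 1 : ℕ) : ℂ)) (p : ℕ) (hp : 1 ≤ p)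
    (w : ℂ) (hw : w = z + (p : ℂ)) : Complex.Gamma w ≠ 0 := by
  subst hw
  refine Complex.Gamma_ne_zero fun n => ?_
  intro h
  exact zshift_ne z hz (p + n) (by omega) (by push_cast; push_cast at h; linear_combination h)

lemma Gsplit' (z : ℂ) (hz : ∀ k : ℕ, z ≠ -((k + 1 : ℕ) : ℂ)) (p q : ℕ) (hp : 1 ≤ p)
    (w u v : ℂ) (hw : w = z + ((p + q : ℕ) : ℂ)) (hu : u = z + (p : ℂ))
    (hv : v = z + ((p + q : ℕ) : ℂ) - 1) :
    Complex.Gamma w = Complex.Gamma u * dd v q := by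
  subst hw hu hv
  have hyp : ∀ t : ℕ, t < q → (z + (p : ℂ)) + t ≠ 0 := by
    intro t ht h0
    exact zshift_ne z hz (p + t) (by omega)
      (by push_cast; push_cast at h0; linear_combination h0)
  have h := Gamma_aa q (z + (p : ℂ)) hyp
  rw [show z + ((p + q : ℕ) : ℂ) = (z + (p : ℂ)) + (q : ℂ) from by push_cast; ring, h]
  congr 1
  rw [dd_eq_aa]
  congr 1
  push_cast
  ring

lemma cancel4 (g1 g2 g3 g4 d1 d2 d3 d4 : ℂ) (h1 : g1 ≠ 0) (h2 : g2 ≠ 0)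
    (h3 : g3 ≠ 0) (h4 : g4 ≠ 0) :
    1 / (g1 * g2 * g3 * g4) * (g1 * d1 * (g2 * d2) * (g3 * d3) * (g4 * d4))
      = d1 * d2 * d3 * d4 := by
  field_simp

lemma cancel6 (gb gab gc gcm g2 g3 d5 d6 d2 d3 : ℂ) (hgb : gb ≠ 0) (hgab : gab ≠ 0)
    (hgc : gc ≠ 0) (hgcm : gcm ≠ 0) (h2 : g2 ≠ 0) (h3 : g3 ≠ 0) :
    1 / (gb * gab * gc * gcm) * (gab * d5 * (gc * d6) / (g2 * g3))
      * (gcm * (g2 * d2) * (g3 * d3) * gb) = d2 * d3 * d5 * d6 := by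
  have hD : gb * gab * gc * gcm * (g2 * g3) ≠ 0 :=
    mul_ne_zero (mul_ne_zero (mul_ne_zero (mul_ne_zero hgb hgab) hgc) hgcm)
      (mul_ne_zero h2 h3)
  rw [show 1 / (gb * gab * gc * gcm) * (gab * d5 * (gc * d6) / (g2 * g3))
      * (gcm * (g2 * d2) * (g3 * d3) * gb)
      = (gab * d5 * (gc * d6) * (gcm * (g2 * d2) * (g3 * d3) * gb))
        / (gb * gab * gc * gcm * (g2 * g3)) from by ring]
  rw [div_eq_iff hD]
  ring

theorem lemma2_sum_identity (m c : ℕ) (hm : 1 ≤ m) (hc : 1 ≤ c) (a b : ℂ)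
    (ha : ∀ k : ℕ, a ≠ -(k + 1 : ℕ)) (hb : ∀ k : ℕ, b ≠ -(k + 1 : ℕ))
    (hab : ∀ k : ℕ, a + b ≠ -(k + 1 : ℕ)) :
    ∑ i ∈ Finset.Icc 1 m,
        1 / (Complex.Gamma ((c : ℂ) + i) * Complex.Gamma (a + i)
          * Complex.Gamma ((m : ℂ) + 1 - i) * Complex.Gamma ((m : ℂ) + b + 1 - i)) =
      (1 / (Complex.Gamma ((m : ℂ) + b) * Complex.Gamma ((m : ℂ) + a + b)
          * Complex.Gamma (c : ℂ) * Complex.Gamma ((m : ℂ) + c))) *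
        ∑ i ∈ Finset.Icc 1 m,
          Complex.Gamma ((m : ℂ) + a + b + i - 1) * Complex.Gamma ((m : ℂ) + c - i)
            / (Complex.Gamma (a + i) * Complex.Gamma ((m : ℂ) - i + 1)) := by
  obtain ⟨M, rfl⟩ : ∃ M, m = M + 1 := ⟨m - 1, by omega⟩
  have h0 : ∀ k : ℕ, (0 : ℂ) ≠ -((k + 1 : ℕ) : ℂ) := by
    intro k h
    have h2 : ((k + 1 : ℕ) : ℂ) = 0 := by linear_combination h
    push_cast at h2
    exact Nat.cast_add_one_ne_zero k h2
  -- nonvanishing facts (k-independent)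
  have n5 : Complex.Gamma (((M + 1 : ℕ) : ℂ) + b) ≠ 0 :=
    Gne' b hb (M + 1) (by omega) _ (by push_cast; ring)
  have n6 : Complex.Gamma (((M + 1 : ℕ) : ℂ) + a + b) ≠ 0 :=
    Gne' (a + b) hab (M + 1) (by omega) _ (by push_cast; ring)
  have n7 : Complex.Gamma ((c : ℂ)) ≠ 0 :=
    Gne' 0 h0 c hc _ (by push_cast; ring)
  have n9 : Complex.Gamma ((c : ℂ) + ((M + 1 : ℕ) : ℂ)) ≠ 0 :=
    Gne' 0 h0 (c + (M + 1)) (by omega) _ (by push_cast; ring)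
  have n10 : Complex.Gamma (a + ((M + 1 : ℕ) : ℂ)) ≠ 0 :=
    Gne' a ha (M + 1) (by omega) _ (by push_cast; ring)
  have n11 : Complex.Gamma (((M + 1 : ℕ) : ℂ)) ≠ 0 :=
    Gne' 0 h0 (M + 1) (by omega) _ (by push_cast; ring)
  have hGne : Complex.Gamma ((c : ℂ) + ((M + 1 : ℕ) : ℂ)) * Complex.Gamma (a + ((M + 1 : ℕ) : ℂ))
      * Complex.Gamma (((M + 1 : ℕ) : ℂ)) * Complex.Gamma (((M + 1 : ℕ) : ℂ) + b) ≠ 0 :=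
    mul_ne_zero (mul_ne_zero (mul_ne_zero n9 n10) n11) n5
  apply mul_right_cancel₀ hGne
  rw [show Finset.Icc 1 (M + 1) = Finset.Ico 1 (M + 1 + 1) from (Finset.Ico_add_one_right_eq_Icc 1 (M + 1))]
  rw [Finset.sum_Ico_eq_sum_range, Finset.sum_Ico_eq_sum_range]
  simp only [show M + 1 + 1 - 1 = M + 1 from by omega]
  set G := Complex.Gamma ((c : ℂ) + ((M + 1 : ℕ) : ℂ)) * Complex.Gamma (a + ((M + 1 : ℕ) : ℂ))
      * Complex.Gamma (((M + 1 : ℕ) : ℂ)) * Complex.Gamma (((M + 1 : ℕ) : ℂ) + b) with hGdef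
  calc (∑ k ∈ range (M + 1),
        1 / (Complex.Gamma ((c : ℂ) + ((1 + k : ℕ) : ℂ)) * Complex.Gamma (a + ((1 + k : ℕ) : ℂ))
          * Complex.Gamma (((M + 1 : ℕ) : ℂ) + 1 - ((1 + k : ℕ) : ℂ))
          * Complex.Gamma (((M + 1 : ℕ) : ℂ) + b + 1 - ((1 + k : ℕ) : ℂ)))) * G
      = ∑ k ∈ range (M + 1),
        1 / (Complex.Gamma ((c : ℂ) + ((1 + k : ℕ) : ℂ)) * Complex.Gamma (a + ((1 + k : ℕ) : ℂ))
          * Complex.Gamma (((M + 1 : ℕ) : ℂ) + 1 - ((1 + k : ℕ) : ℂ))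
          * Complex.Gamma (((M + 1 : ℕ) : ℂ) + b + 1 - ((1 + k : ℕ) : ℂ))) * G :=
        Finset.sum_mul _ _ _
    _ = ∑ k ∈ range (M + 1), dd ((M : ℕ) : ℂ) k * dd (a + ((M : ℕ) : ℂ)) (M - k)
          * dd (b + ((M : ℕ) : ℂ)) k * dd ((c : ℂ) + ((M : ℕ) : ℂ)) (M - k) := by
        refine Finset.sum_congr rfl fun k hkr => ?_
        have hk : k ≤ M := Nat.lt_succ_iff.mp (mem_range.mp hkr)
        have f1 : Complex.Gamma ((c : ℂ) + ((M + 1 : ℕ) : ℂ))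
            = Complex.Gamma ((c : ℂ) + ((1 + k : ℕ) : ℂ)) * dd ((c : ℂ) + ((M : ℕ) : ℂ)) (M - k) :=
          Gsplit' 0 h0 (c + (1 + k)) (M - k) (by omega) _ _ _
            (by rw [show c + (1 + k) + (M - k) = c + (M + 1) from by omega]; push_cast; ring)
            (by push_cast; ring)
            (by rw [show c + (1 + k) + (M - k) = c + (M + 1) from by omega]; push_cast; ring)
        have f2 : Complex.Gamma (a + ((M + 1 : ℕ) : ℂ))
            = Complex.Gamma (a + ((1 + k : ℕ) : ℂ)) * dd (a + ((M : ℕ) : ℂ)) (M - k) :=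
          Gsplit' a ha (1 + k) (M - k) (by omega) _ _ _
            (by rw [show 1 + k + (M - k) = M + 1 from by omega])
            (by push_cast; ring)
            (by rw [show 1 + k + (M - k) = M + 1 from by omega]; push_cast; ring)
        have f3 : Complex.Gamma (((M + 1 : ℕ) : ℂ))
            = Complex.Gamma (((M + 1 : ℕ) : ℂ) + 1 - ((1 + k : ℕ) : ℂ)) * dd ((M : ℕ) : ℂ) k :=
          Gsplit' 0 h0 (M - k + 1) k (by omega) _ _ _
            (by rw [show M - k + 1 + k = M + 1 from by omega]; push_cast; ring)
            (by rw [show ((M - k + 1 : ℕ) : ℂ) = ((M : ℂ) - (k : ℂ) + 1) from by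
                  push_cast [Nat.cast_sub hk]; ring]; push_cast; ring)
            (by rw [show M - k + 1 + k = M + 1 from by omega]; push_cast; ring)
        have f4 : Complex.Gamma (((M + 1 : ℕ) : ℂ) + b)
            = Complex.Gamma (((M + 1 : ℕ) : ℂ) + b + 1 - ((1 + k : ℕ) : ℂ))
              * dd (b + ((M : ℕ) : ℂ)) k :=
          Gsplit' b hb (M - k + 1) k (by omega) _ _ _
            (by rw [show M - k + 1 + k = M + 1 from by omega]; push_cast; ring)
            (by rw [show ((M - k + 1 : ℕ) : ℂ) = ((M : ℂ) - (k : ℂ) + 1) from by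
                  push_cast [Nat.cast_sub hk]; ring]; push_cast; ring)
            (by rw [show M - k + 1 + k = M + 1 from by omega]; push_cast; ring)
        have n1 : Complex.Gamma ((c : ℂ) + ((1 + k : ℕ) : ℂ)) ≠ 0 :=
          Gne' 0 h0 (c + (1 + k)) (by omega) _ (by push_cast; ring)
        have n2 : Complex.Gamma (a + ((1 + k : ℕ) : ℂ)) ≠ 0 :=
          Gne' a ha (1 + k) (by omega) _ (by push_cast; ring)
        have n3 : Complex.Gamma (((M + 1 : ℕ) : ℂ) + 1 - ((1 + k : ℕ) : ℂ)) ≠ 0 :=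
          Gne' 0 h0 (M - k + 1) (by omega) _
            (by push_cast [Nat.cast_sub hk]; ring)
        have n4 : Complex.Gamma (((M + 1 : ℕ) : ℂ) + b + 1 - ((1 + k : ℕ) : ℂ)) ≠ 0 :=
          Gne' b hb (M - k + 1) (by omega) _
            (by push_cast [Nat.cast_sub hk]; ring)
        rw [hGdef, f1, f2, f3, f4, cancel4 _ _ _ _ _ _ _ _ n1 n2 n3 n4]
        ring
    _ = ∑ k ∈ range (M + 1), dd ((M : ℕ) : ℂ) k * dd (a + ((M : ℕ) : ℂ)) (M - k)
          * dd ((a + ((M : ℕ) : ℂ)) + (b + ((M : ℕ) : ℂ)) - ((M : ℕ) : ℂ) + (k : ℂ)) k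
          * dd (((c : ℂ) + ((M : ℕ) : ℂ)) - (k : ℂ) - 1) (M - k) :=
        genB M (a + ((M : ℕ) : ℂ)) (b + ((M : ℕ) : ℂ)) ((c : ℂ) + ((M : ℕ) : ℂ))
    _ = ∑ k ∈ range (M + 1),
        (1 / (Complex.Gamma (((M + 1 : ℕ) : ℂ) + b) * Complex.Gamma (((M + 1 : ℕ) : ℂ) + a + b)
          * Complex.Gamma ((c : ℂ)) * Complex.Gamma (((M + 1 : ℕ) : ℂ) + (c : ℂ)))) *
          (Complex.Gamma (((M + 1 : ℕ) : ℂ) + a + b + ((1 + k : ℕ) : ℂ) - 1)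
            * Complex.Gamma (((M + 1 : ℕ) : ℂ) + (c : ℂ) - ((1 + k : ℕ) : ℂ))
            / (Complex.Gamma (a + ((1 + k : ℕ) : ℂ))
              * Complex.Gamma (((M + 1 : ℕ) : ℂ) - ((1 + k : ℕ) : ℂ) + 1))) * G := by
        refine (Finset.sum_congr rfl fun k hkr => ?_).symm
        have hk : k ≤ M := Nat.lt_succ_iff.mp (mem_range.mp hkr)
        have f2 : Complex.Gamma (a + ((M + 1 : ℕ) : ℂ))
            = Complex.Gamma (a + ((1 + k : ℕ) : ℂ)) * dd (a + ((M : ℕ) : ℂ)) (M - k) :=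
          Gsplit' a ha (1 + k) (M - k) (by omega) _ _ _
            (by rw [show 1 + k + (M - k) = M + 1 from by omega])
            (by push_cast; ring)
            (by rw [show 1 + k + (M - k) = M + 1 from by omega]; push_cast; ring)
        have f3 : Complex.Gamma (((M + 1 : ℕ) : ℂ))
            = Complex.Gamma (((M + 1 : ℕ) : ℂ) - ((1 + k : ℕ) : ℂ) + 1) * dd ((M : ℕ) : ℂ) k :=
          Gsplit' 0 h0 (M - k + 1) k (by omega) _ _ _
            (by rw [show M - k + 1 + k = M + 1 from by omega]; push_cast; ring)
            (by rw [show ((M - k + 1 : ℕ) : ℂ) = ((M : ℂ) - (k : ℂ) + 1) from by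
                  push_cast [Nat.cast_sub hk]; ring]; push_cast; ring)
            (by rw [show M - k + 1 + k = M + 1 from by omega]; push_cast; ring)
        have f5 : Complex.Gamma (((M + 1 : ℕ) : ℂ) + a + b + ((1 + k : ℕ) : ℂ) - 1)
            = Complex.Gamma (((M + 1 : ℕ) : ℂ) + a + b)
              * dd ((a + ((M : ℕ) : ℂ)) + (b + ((M : ℕ) : ℂ)) - ((M : ℕ) : ℂ) + (k : ℂ)) k :=
          Gsplit' (a + b) hab (M + 1) k (by omega) _ _ _
            (by push_cast; ring)
            (by push_cast; ring)
            (by push_cast; ring)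
        have f6 : Complex.Gamma (((M + 1 : ℕ) : ℂ) + (c : ℂ) - ((1 + k : ℕ) : ℂ))
            = Complex.Gamma ((c : ℂ))
              * dd (((c : ℂ) + ((M : ℕ) : ℂ)) - (k : ℂ) - 1) (M - k) :=
          Gsplit' 0 h0 c (M - k) hc _ _ _
            (by push_cast [Nat.cast_sub hk]; ring)
            (by push_cast; ring)
            (by push_cast [Nat.cast_sub hk]; ring)
        have f7 : Complex.Gamma (((M + 1 : ℕ) : ℂ) + (c : ℂ))
            = Complex.Gamma ((c : ℂ) + ((M + 1 : ℕ) : ℂ)) := by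
          rw [show ((M + 1 : ℕ) : ℂ) + (c : ℂ) = (c : ℂ) + ((M + 1 : ℕ) : ℂ) from by ring]
        have n2 : Complex.Gamma (a + ((1 + k : ℕ) : ℂ)) ≠ 0 :=
          Gne' a ha (1 + k) (by omega) _ (by push_cast; ring)
        have n3 : Complex.Gamma (((M + 1 : ℕ) : ℂ) - ((1 + k : ℕ) : ℂ) + 1) ≠ 0 :=
          Gne' 0 h0 (M - k + 1) (by omega) _
            (by push_cast [Nat.cast_sub hk]; ring)
        rw [hGdef, f5, f6, f7, f2, f3, cancel6 _ _ _ _ _ _ _ _ _ _ n5 n6 n7 n9 n2 n3]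
        ring
    _ = (1 / (Complex.Gamma (((M + 1 : ℕ) : ℂ) + b) * Complex.Gamma (((M + 1 : ℕ) : ℂ) + a + b)
          * Complex.Gamma ((c : ℂ)) * Complex.Gamma (((M + 1 : ℕ) : ℂ) + (c : ℂ)))) *
        (∑ k ∈ range (M + 1),
          Complex.Gamma (((M + 1 : ℕ) : ℂ) + a + b + ((1 + k : ℕ) : ℂ) - 1)
            * Complex.Gamma (((M + 1 : ℕ) : ℂ) + (c : ℂ) - ((1 + k : ℕ) : ℂ))
            / (Complex.Gamma (a + ((1 + k : ℕ) : ℂ))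
              * Complex.Gamma (((M + 1 : ℕ) : ℂ) - ((1 + k : ℕ) : ℂ) + 1))) * G := by
        rw [← Finset.sum_mul, ← Finset.mul_sum]
end

section
/- (Lemma 3) Let m and c be positive integers, let a be a complex number that is not a nonpositive integer, and let b be a complex number that is not a negative integer. Then Σ_{i=1}^m 1/(Γ(c+i)·Γ(a+i)·Γ(m−i+1)·Γ(b−i+m+1)·i) = (1/(Γ(a)·Γ(a+m)·Γ(1+b+m)·Γ(b+c+m))) · Σ_{i=1}^m Γ(a−i+m)·Γ(b+c+i+m)/(Γ(c+i)·Γ(m−i+1)·i) + (ψ₀(a) − ψ₀(a+m))/(Γ(a)·Γ(c)·Γ(m+1)·Γ(b+m+1)). -/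
open Complex Finset Polynomial
open scoped Nat

/-- The digamma function `ψ₀(z) = Γ′(z)/Γ(z)`. -/


noncomputable def cdigamma (z : ℂ) : ℂ := deriv Complex.Gamma z / Complex.Gamma z

noncomputable def asc (z : ℂ) (n : ℕ) : ℂ := ∏ j ∈ Finset.range n, (z + j)

lemma asc_zero (z : ℂ) : asc z 0 = 1 := by simp [asc]

lemma asc_succ (z : ℂ) (n : ℕ) : asc z (n + 1) = asc z n * (z + n) := by
  simp [asc, Finset.prod_range_succ]

lemma asc_succ' (z : ℂ) (n : ℕ) : asc z (n + 1) = z * asc (z + 1) n := by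
  rw [asc, Finset.prod_range_succ']
  simp only [asc, Nat.cast_zero, add_zero]
  rw [mul_comm]
  congr 1
  exact Finset.prod_congr rfl fun j _ => by push_cast; ring

lemma asc_ne_zero {z : ℂ} {n : ℕ} (h : ∀ j : ℕ, j < n → z + j ≠ 0) : asc z n ≠ 0 := by
  rw [asc]
  exact Finset.prod_ne_zero_iff.mpr fun j hj => h j (Finset.mem_range.mp hj)

lemma Gamma_add_nat_s6 {z : ℂ} (n : ℕ) (h : ∀ j : ℕ, j < n → z + j ≠ 0) :
    Complex.Gamma (z + n) = Complex.Gamma z * asc z n := by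
  induction n with
  | zero => simp [asc_zero]
  | succ n ih =>
    have hzn : z + n ≠ 0 := h n (Nat.lt_succ_self n)
    have : Complex.Gamma (z + ((n : ℕ) + 1 : ℕ)) = Complex.Gamma ((z + n) + 1) := by
      congr 1; push_cast; ring
    rw [this, Complex.Gamma_add_one _ hzn, ih (fun j hj => h j (Nat.lt_succ_of_lt hj)),
      asc_succ]
    ring

lemma cdigamma_add_one {z : ℂ} (hz : ∀ k : ℕ, z ≠ -(k : ℂ)) :
    cdigamma (z + 1) = cdigamma z + 1 / z := by
  have hz0 : z ≠ 0 := by have := hz 0; simpa using this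
  have hdiff : DifferentiableAt ℂ Complex.Gamma z := Complex.differentiableAt_Gamma z hz
  have hG : Complex.Gamma z ≠ 0 := Complex.Gamma_ne_zero hz
  have h1 : deriv (fun w => Complex.Gamma (w + 1)) z = deriv Complex.Gamma (z + 1) := by
    exact deriv_comp_add_const Complex.Gamma 1 z
  have h2 : (fun w => Complex.Gamma (w + 1)) =ᶠ[nhds z] fun w => w * Complex.Gamma w := by
    filter_upwards [isOpen_ne.mem_nhds hz0] with w hw
    exact Complex.Gamma_add_one w hw
  have h3 : deriv Complex.Gamma (z + 1) = deriv (fun w => w * Complex.Gamma w) z := by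
    rw [← h1]; exact h2.deriv_eq
  have h4 : deriv (fun w => w * Complex.Gamma w) z
      = Complex.Gamma z + z * deriv Complex.Gamma z := by
    rw [deriv_fun_mul differentiableAt_fun_id hdiff]
    simp
  unfold cdigamma
  rw [h3, h4, Complex.Gamma_add_one z hz0]
  field_simp
  ring

lemma cdigamma_diff {a : ℂ} (ha : ∀ k : ℕ, a ≠ -(k : ℂ)) (m : ℕ) :
    cdigamma a - cdigamma (a + m) = -∑ k ∈ Finset.range m, 1 / (a + k) := by
  induction m with
  | zero => simp
  | succ m ih =>
    have ham : ∀ k : ℕ, a + m ≠ -(k : ℂ) := by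
      intro k hk
      have : a = -((k + m : ℕ) : ℂ) := by push_cast; linear_combination hk
      exact ha (k + m) this
    have heq : cdigamma (a + ((m : ℕ) + 1 : ℕ)) = cdigamma (a + m) + 1 / (a + m) := by
      rw [← cdigamma_add_one ham]; congr 1; push_cast; ring
    rw [Finset.sum_range_succ, heq, neg_add, ← ih]
    ring



noncomputable def fall (z : ℂ) (n : ℕ) : ℂ := ∏ j ∈ Finset.range n, (z - j)

lemma fall_zero (z : ℂ) : fall z 0 = 1 := by simp [fall]

lemma fall_succ (z : ℂ) (n : ℕ) : fall z (n + 1) = fall z n * (z - n) := by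
  simp [fall, Finset.prod_range_succ]

/-- the polynomial ∏_{j<n} (X + (z+j)) -/
noncomputable def AP (z : ℂ) (n : ℕ) : Polynomial ℂ :=
  ∏ j ∈ Finset.range n, (X + C (z + j))

lemma vdm (M : ℕ) (x y : ℂ) :
    ∑ i ∈ Finset.range (M + 1), (M.choose i : ℂ) * fall x i * fall y (M - i)
      = fall (x + y) M := by
  induction M with
  | zero => simp [fall]
  | succ M ih =>
    rw [Finset.sum_range_succ']
    have h1 : ∀ i ∈ Finset.range (M + 1),
        ((M + 1).choose (i + 1) : ℂ) * fall x (i + 1) * fall y (M + 1 - (i + 1))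
          = (M.choose i : ℂ) * fall x i * fall y (M - i) * (x - i)
            + (M.choose (i + 1) : ℂ) * fall x (i + 1) * fall y (M + 1 - (i + 1)) := by
      intro i _
      rw [Nat.choose_succ_succ M i, Nat.succ_sub_succ, fall_succ]
      push_cast
      ring
    rw [Finset.sum_congr rfl h1, Finset.sum_add_distrib]
    -- second sum plus the peeled term
    have h2 : (∑ i ∈ Finset.range (M + 1),
          (M.choose (i + 1) : ℂ) * fall x (i + 1) * fall y (M + 1 - (i + 1)))
          + ((M + 1).choose 0 : ℂ) * fall x 0 * fall y (M + 1 - 0)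
        = ∑ i ∈ Finset.range (M + 1),
            (M.choose i : ℂ) * fall x i * fall y (M - i) * (y - ((M : ℂ) - i)) := by
      have h3 : (∑ i ∈ Finset.range (M + 2),
            (M.choose i : ℂ) * fall x i * fall y (M + 1 - i))
          = (∑ i ∈ Finset.range (M + 1),
            (M.choose (i + 1) : ℂ) * fall x (i + 1) * fall y (M + 1 - (i + 1)))
            + ((M + 1).choose 0 : ℂ) * fall x 0 * fall y (M + 1 - 0) := by
        rw [Finset.sum_range_succ']
        simp
      rw [← h3, Finset.sum_range_succ, Nat.choose_succ_self]
      simp only [Nat.cast_zero, zero_mul, add_zero]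
      refine Finset.sum_congr rfl fun i hi => ?_
      have hiM : i ≤ M := Nat.lt_succ_iff.mp (Finset.mem_range.mp hi)
      have : M + 1 - i = (M - i) + 1 := by omega
      rw [this, fall_succ]
      have : ((M - i : ℕ) : ℂ) = (M : ℂ) - i := by
        push_cast [Nat.cast_sub hiM]; ring
      rw [this]
      ring
    rw [add_assoc, h2, ← Finset.sum_add_distrib]
    have h4 : ∀ i ∈ Finset.range (M + 1),
        (M.choose i : ℂ) * fall x i * fall y (M - i) * (x - i)
          + (M.choose i : ℂ) * fall x i * fall y (M - i) * (y - ((M : ℂ) - i))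
        = (x + y - M) * ((M.choose i : ℂ) * fall x i * fall y (M - i)) := by
      intro i _; ring
    rw [Finset.sum_congr rfl h4, ← Finset.mul_sum, ih, fall_succ]
    ring



lemma AP_zero (z : ℂ) : AP z 0 = 1 := by simp [AP]

lemma AP_succ (z : ℂ) (n : ℕ) : AP z (n + 1) = AP z n * (X + C (z + n)) := by
  simp [AP, Finset.prod_range_succ]

lemma AP_succ' (z : ℂ) (n : ℕ) : AP z (n + 1) = (X + C z) * AP (z + 1) n := by
  rw [AP, Finset.prod_range_succ']
  simp only [Nat.cast_zero, add_zero]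
  rw [mul_comm]
  congr 1
  exact Finset.prod_congr rfl fun j _ => by push_cast; ring_nf

lemma AP_comp (z : ℂ) (n : ℕ) : (AP z n).comp (X + 1) = AP (z + 1) n := by
  rw [AP, Polynomial.prod_comp]
  refine Finset.prod_congr rfl fun j _ => ?_
  rw [add_comp, X_comp, C_comp]
  have h : (C (z + 1 + (j:ℂ)) : Polynomial ℂ) = C (z + (j:ℂ)) + 1 := by
    rw [← map_one (@Polynomial.C ℂ _), ← map_add]
    congr 1
    ring
  rw [h]
  ring

lemma AP_diff (z : ℂ) (n : ℕ) :
    AP (z + 1) (n + 1) - AP z (n + 1) = C ((n : ℂ) + 1) * AP (z + 1) n := by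
  rw [AP_succ, AP_succ']
  have h : (C ((n : ℂ) + 1) : Polynomial ℂ) = C (z + 1 + (n : ℂ)) - C z := by
    rw [← map_sub]; congr 1; ring
  rw [h]
  ring

lemma AP_eval (z : ℂ) (n : ℕ) (a : ℂ) : (AP z n).eval a = asc (a + z) n := by
  rw [AP, Polynomial.eval_prod, asc]
  exact Finset.prod_congr rfl fun j _ => by simp; ring

lemma AP_deriv_eval_zero (m : ℕ) : (derivative (AP 0 (m + 1))).eval 0 = (m ! : ℂ) := by
  induction m with
  | zero => simp [AP]
  | succ m ih =>
    rw [AP_succ, derivative_mul]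
    simp only [derivative_add, derivative_X, derivative_C, add_zero, eval_add, eval_mul,
      eval_add, eval_X, eval_C, mul_one]
    rw [ih, AP_eval]
    have : asc (0 + 0) (m + 1) = 0 := by
      rw [asc]
      exact Finset.prod_eq_zero (Finset.mem_range.mpr (Nat.succ_pos m)) (by simp)
    rw [this, Nat.factorial_succ]
    push_cast
    ring

lemma poly_rigid (P : Polynomial ℂ) (hcomp : P.comp (X + 1) = P) (h0 : P.eval 0 = 0) :
    P = 0 := by
  have hn : ∀ n : ℕ, P.eval (n : ℂ) = 0 := by
    intro n
    induction n with
    | zero => simpa using h0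
    | succ n ih =>
      have : P.eval ((n : ℂ) + 1) = (P.comp (X + 1)).eval (n : ℂ) := by
        rw [eval_comp]; simp
      rw [show ((n + 1 : ℕ) : ℂ) = (n : ℂ) + 1 by push_cast; ring, this, hcomp, ih]
  refine Polynomial.eq_zero_of_infinite_isRoot P ?_
  apply Set.infinite_of_injective_forall_mem (f := fun n : ℕ => (n : ℂ))
    (hi := fun a b h => Nat.cast_injective h)
  intro n
  exact hn n

lemma fact_asc (p : ℕ) : ∀ n : ℕ, p ! * (∏ j ∈ Finset.range n, (p + 1 + j)) = (p + n)! := by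
  intro n
  induction n with
  | zero => simp
  | succ n ih =>
    rw [Finset.prod_range_succ, ← mul_assoc, ih, ← Nat.add_assoc]
    rw [Nat.factorial_succ]
    ring

lemma fall_eq_asc (n : ℕ) : ∀ z : ℂ, fall z n = asc (z - n + 1) n := by
  induction n with
  | zero => intro z; simp [fall, asc]
  | succ n ih =>
    intro z
    rw [fall_succ, ih]
    have : asc (z - (n + 1 : ℕ) + 1) (n + 1) = (z - n) * asc (z - n + 1) n := by
      rw [asc_succ']
      push_cast
      ring_nf
    rw [this]
    ring
section Stage4

lemma finset_sum_comp {ι : Type*} (s : Finset ι) (g : ι → Polynomial ℂ) (r : Polynomial ℂ) :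
    (∑ i ∈ s, g i).comp r = ∑ i ∈ s, (g i).comp r := by
  simp only [Polynomial.comp]
  exact Polynomial.eval₂_finset_sum _ _ _ _

noncomputable def P1 (c m : ℕ) (b : ℂ) : Polynomial ℂ :=
  ∑ k ∈ Finset.range m,
    C (asc (b + m - k) (k + 1) / (((c + k)! : ℂ) * ((m - 1 - k)! : ℂ) * ((k : ℂ) + 1)))
      * AP ((k : ℂ) + 1) (m - 1 - k)

noncomputable def P2 (c m : ℕ) : Polynomial ℂ :=
  C (1 / (((c - 1)! : ℂ) * (m ! : ℂ))) * derivative (AP 0 m)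

noncomputable def P3 (c m : ℕ) (b : ℂ) : Polynomial ℂ :=
  ∑ k ∈ Finset.range m,
    C (asc (b + c + m) (k + 1) / (((c + k)! : ℂ) * ((m - 1 - k)! : ℂ) * ((k : ℂ) + 1)))
      * AP 0 (m - 1 - k)

lemma cast_factorial_ne (n : ℕ) : ((n ! : ℕ) : ℂ) ≠ 0 :=
  Nat.cast_ne_zero.mpr (Nat.factorial_ne_zero n)

lemma cast_succ_ne (k : ℕ) : ((k : ℂ) + 1) ≠ 0 := by
  have : ((k : ℂ) + 1) = ((k + 1 : ℕ) : ℂ) := by push_cast; ring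
  rw [this]
  exact Nat.cast_ne_zero.mpr (Nat.succ_ne_zero k)

lemma P1_delta (c m : ℕ) (b : ℂ) :
    (P1 c (m + 1) b).comp (X + 1) - P1 c (m + 1) b = (P1 c m (b + 1)).comp (X + 1) := by
  rw [P1, P1, finset_sum_comp, finset_sum_comp, ← Finset.sum_sub_distrib]
  rw [Finset.sum_range_succ]
  simp only [Nat.add_sub_cancel]
  have htop : (C (asc (b + (m + 1 : ℕ) - m) (m + 1) /
        (((c + m)! : ℂ) * ((m - m)! : ℂ) * ((m : ℂ) + 1)))
      * AP ((m : ℂ) + 1) (m - m)).comp (X + 1)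
      - C (asc (b + (m + 1 : ℕ) - m) (m + 1) /
        (((c + m)! : ℂ) * ((m - m)! : ℂ) * ((m : ℂ) + 1)))
      * AP ((m : ℂ) + 1) (m - m) = 0 := by
    rw [Nat.sub_self, AP_zero, mul_one, C_comp, sub_self]
  rw [htop, add_zero]
  refine Finset.sum_congr rfl fun k hk => ?_
  have hkm : k < m := Finset.mem_range.mp hk
  have hmk : m - k = (m - 1 - k) + 1 := by omega
  rw [mul_comp, C_comp, mul_comp, C_comp, AP_comp, AP_comp, ← mul_sub, hmk,
    AP_diff ((k : ℂ) + 1) (m - 1 - k), ← mul_assoc, ← map_mul]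
  congr 2
  have h1 := cast_factorial_ne (c + k)
  have h2 := cast_factorial_ne (m - 1 - k)
  have h3 := cast_succ_ne k
  have h4 := cast_succ_ne (m - 1 - k)
  have harg : b + ((m + 1 : ℕ) : ℂ) - k = b + 1 + (m : ℕ) - k := by push_cast; ring
  rw [harg, Nat.factorial_succ]
  push_cast
  field_simp

lemma P3_delta (c m : ℕ) (b : ℂ) :
    (P3 c (m + 1) b).comp (X + 1) - P3 c (m + 1) b = (P3 c m (b + 1)).comp (X + 1) := by
  rw [P3, P3, finset_sum_comp, finset_sum_comp, ← Finset.sum_sub_distrib]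
  rw [Finset.sum_range_succ]
  simp only [Nat.add_sub_cancel]
  have htop : (C (asc (b + c + (m + 1 : ℕ)) (m + 1) /
        (((c + m)! : ℂ) * ((m - m)! : ℂ) * ((m : ℂ) + 1)))
      * AP 0 (m - m)).comp (X + 1)
      - C (asc (b + c + (m + 1 : ℕ)) (m + 1) /
        (((c + m)! : ℂ) * ((m - m)! : ℂ) * ((m : ℂ) + 1)))
      * AP 0 (m - m) = 0 := by
    rw [Nat.sub_self, AP_zero, mul_one, C_comp, sub_self]
  rw [htop, add_zero]
  refine Finset.sum_congr rfl fun k hk => ?_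
  have hkm : k < m := Finset.mem_range.mp hk
  have hmk : m - k = (m - 1 - k) + 1 := by omega
  rw [mul_comp, C_comp, mul_comp, C_comp, AP_comp, AP_comp, ← mul_sub, hmk,
    AP_diff 0 (m - 1 - k), ← mul_assoc, ← map_mul]
  congr 2
  have h1 := cast_factorial_ne (c + k)
  have h2 := cast_factorial_ne (m - 1 - k)
  have h3 := cast_succ_ne k
  have h4 := cast_succ_ne (m - 1 - k)
  have harg : b + c + ((m + 1 : ℕ) : ℂ) = b + 1 + c + (m : ℕ) := by push_cast; ring
  rw [harg, Nat.factorial_succ]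
  push_cast
  field_simp

lemma deriv_comp_X_add_one (p : Polynomial ℂ) :
    (derivative p).comp (X + 1) = derivative (p.comp (X + 1)) := by
  rw [Polynomial.derivative_comp]
  simp

lemma P2_delta (c m : ℕ) :
    (P2 c (m + 1)).comp (X + 1) - P2 c (m + 1) = (P2 c m).comp (X + 1) := by
  rw [P2, P2, mul_comp, C_comp, mul_comp, C_comp, deriv_comp_X_add_one,
    deriv_comp_X_add_one, AP_comp, AP_comp, zero_add]
  have hdiff : AP 1 (m + 1) = AP 0 (m + 1) + C ((m : ℂ) + 1) * AP 1 m := by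
    have h := AP_diff 0 m
    rw [zero_add] at h
    linear_combination h
  rw [hdiff, derivative_add, derivative_C_mul, mul_add, ← mul_assoc, ← map_mul]
  have hc : (1 : ℂ) / (((c - 1)! : ℂ) * (((m + 1)! : ℕ) : ℂ)) * ((m : ℂ) + 1)
      = 1 / (((c - 1)! : ℂ) * ((m ! : ℕ) : ℂ)) := by
    rw [Nat.factorial_succ]
    have h1 := cast_factorial_ne (c - 1)
    have h2 := cast_factorial_ne m
    have h3 := cast_succ_ne m
    push_cast
    field_simp
  rw [hc]
  ring

end Stage4
section Stage5

lemma asc_eq_zero (n : ℕ) (hn : 1 ≤ n) : asc 0 n = 0 := by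
  rw [asc]
  exact Finset.prod_eq_zero (Finset.mem_range.mpr hn) (by simp)

lemma asc_natCast (p n : ℕ) : asc ((p : ℕ) : ℂ) n = ((∏ j ∈ Finset.range n, (p + j) : ℕ) : ℂ) := by
  rw [asc]
  push_cast
  rfl

lemma nat_id (c m k : ℕ) (hk : k ≤ m) :
    (∏ j ∈ Finset.range (m - k), (k + 1 + j)) * ((m + 1) * (c + m)!)
      = (m + 1).choose (k + 1) *
        ((∏ j ∈ Finset.range (m - k), (c + k + 1 + j)) * ((c + k)! * ((m - k)! * (k + 1)))) := by
  have e1 : k ! * (∏ j ∈ Finset.range (m - k), (k + 1 + j)) = m ! := by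
    have h := fact_asc k (m - k)
    rwa [show k + (m - k) = m by omega] at h
  have e2 : (c + k)! * (∏ j ∈ Finset.range (m - k), (c + k + 1 + j)) = (c + m)! := by
    have h := fact_asc (c + k) (m - k)
    rwa [show c + k + (m - k) = c + m by omega] at h
  have e3 : (m + 1).choose (k + 1) * (k + 1)! * (m - k)! = (m + 1)! := by
    have h := Nat.choose_mul_factorial_mul_factorial (show k + 1 ≤ m + 1 by omega)
    rwa [show (m + 1) - (k + 1) = m - k by omega] at h
  have pos : 0 < k ! * (c + k)! := Nat.mul_pos k.factorial_pos (c + k).factorial_pos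
  apply Nat.eq_of_mul_eq_mul_left pos
  calc k ! * (c + k)! * ((∏ j ∈ Finset.range (m - k), (k + 1 + j)) * ((m + 1) * (c + m)!))
      = (k ! * (∏ j ∈ Finset.range (m - k), (k + 1 + j))) * ((c + k)! * ((m + 1) * (c + m)!)) := by
        ring
    _ = m ! * ((c + k)! * ((m + 1) * (c + m)!)) := by rw [e1]
    _ = ((m + 1) * m !) * ((c + m)! * (c + k)!) := by ring
    _ = (m + 1)! * ((c + m)! * (c + k)!) := by rw [Nat.factorial_succ]
    _ = ((m + 1).choose (k + 1) * (k + 1)! * (m - k)!) * ((c + m)! * (c + k)!) := by rw [e3]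
    _ = ((m + 1).choose (k + 1) * ((k + 1) * k !) * (m - k)!) * ((c + m)! * (c + k)!) := by
        rw [Nat.factorial_succ]
    _ = ((m + 1).choose (k + 1) * ((k + 1) * k !) * (m - k)!) *
          (((c + k)! * (∏ j ∈ Finset.range (m - k), (c + k + 1 + j))) * (c + k)!) := by rw [e2]
    _ = k ! * (c + k)! * ((m + 1).choose (k + 1) *
          ((∏ j ∈ Finset.range (m - k), (c + k + 1 + j)) * ((c + k)! * ((m - k)! * (k + 1))))) := by
        ring

lemma nat_id0 (c m : ℕ) (hc : 1 ≤ c) :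
    m ! * ((m + 1) * (c + m)!) = (∏ j ∈ Finset.range (m + 1), (c + j)) * ((c - 1)! * (m + 1)!) := by
  have e : (c - 1)! * (∏ j ∈ Finset.range (m + 1), (c + j)) = (c + m)! := by
    have h := fact_asc (c - 1) (m + 1)
    rw [show c - 1 + 1 = c by omega] at h
    rwa [show c - 1 + (m + 1) = c + m by omega] at h
  have pos : 0 < (c - 1)! := Nat.factorial_pos _
  apply Nat.eq_of_mul_eq_mul_left pos
  calc (c - 1)! * (m ! * ((m + 1) * (c + m)!))
      = ((m + 1) * m !) * ((c - 1)! * (c + m)!) := by ring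
    _ = (m + 1)! * ((c - 1)! * (c + m)!) := by rw [Nat.factorial_succ]
    _ = (m + 1)! * ((c - 1)! * ((c - 1)! * (∏ j ∈ Finset.range (m + 1), (c + j)))) := by rw [← e]
    _ = (c - 1)! * ((∏ j ∈ Finset.range (m + 1), (c + j)) * ((c - 1)! * (m + 1)!)) := by ring

lemma main_scalar (c m : ℕ) (hc : 1 ≤ c) (b : ℂ) :
    ∑ k ∈ Finset.range (m + 1),
        asc (b + ((m + 1 : ℕ) : ℂ) - k) (k + 1) /
          (((c + k)! : ℂ) * ((m - k)! : ℂ) * ((k : ℂ) + 1)) * asc ((k : ℂ) + 1) (m - k)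
      + 1 / (((c - 1)! : ℂ) * (((m + 1)! : ℕ) : ℂ)) * ((m ! : ℕ) : ℂ)
    = asc (b + c + ((m + 1 : ℕ) : ℂ)) (m + 1) / (((c + m)! : ℂ) * ((m : ℂ) + 1)) := by
  have V := vdm (m + 1) (b + ((m + 1 : ℕ) : ℂ)) ((c : ℂ) + m)
  rw [Finset.sum_range_succ'] at V
  simp only [Nat.succ_sub_succ_eq_sub, Nat.choose_zero_right, Nat.cast_one, one_mul,
    Nat.sub_zero, fall_zero, mul_one] at V
  -- convert falls to ascs / nat products
  have hsum : ∑ k ∈ Finset.range (m + 1),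
        (((m + 1).choose (k + 1) : ℕ) : ℂ) * fall (b + ((m + 1 : ℕ) : ℂ)) (k + 1)
          * fall ((c : ℂ) + m) (m - k)
      = ∑ k ∈ Finset.range (m + 1),
        (((m + 1).choose (k + 1) : ℕ) : ℂ) * asc (b + ((m + 1 : ℕ) : ℂ) - k) (k + 1)
          * ((∏ j ∈ Finset.range (m - k), (c + k + 1 + j) : ℕ) : ℂ) := by
    refine Finset.sum_congr rfl fun k hk => ?_
    have hkm : k ≤ m := Nat.lt_succ_iff.mp (Finset.mem_range.mp hk)
    have cx : fall (b + ((m + 1 : ℕ) : ℂ)) (k + 1) = asc (b + ((m + 1 : ℕ) : ℂ) - k) (k + 1) := by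
      rw [fall_eq_asc]
      congr 1
      push_cast
      ring
    have cy : fall ((c : ℂ) + m) (m - k)
        = ((∏ j ∈ Finset.range (m - k), (c + k + 1 + j) : ℕ) : ℂ) := by
      rw [fall_eq_asc]
      have harg : (c : ℂ) + m - ((m - k : ℕ) : ℂ) + 1 = ((c + k + 1 : ℕ) : ℂ) := by
        rw [Nat.cast_sub hkm]
        push_cast
        ring
      rw [harg, asc_natCast]
    rw [cx, cy]
  have cy2 : fall ((c : ℂ) + m) (m + 1) = ((∏ j ∈ Finset.range (m + 1), (c + j) : ℕ) : ℂ) := by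
    rw [fall_eq_asc]
    have harg : (c : ℂ) + m - ((m + 1 : ℕ) : ℂ) + 1 = ((c : ℕ) : ℂ) := by push_cast; ring
    rw [harg, asc_natCast]
  have cr : fall (b + ((m + 1 : ℕ) : ℂ) + ((c : ℂ) + m)) (m + 1)
      = asc (b + c + ((m + 1 : ℕ) : ℂ)) (m + 1) := by
    rw [fall_eq_asc]
    congr 1
    push_cast
    ring
  rw [hsum, cy2, cr] at V
  -- multiply both sides by μ
  have hμ : ((m : ℂ) + 1) * (((c + m)! : ℕ) : ℂ) ≠ 0 :=
    mul_ne_zero (cast_succ_ne m) (cast_factorial_ne _)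
  refine mul_right_cancel₀ hμ ?_
  rw [add_mul, Finset.sum_mul]
  have hterm : ∀ k ∈ Finset.range (m + 1),
      asc (b + ((m + 1 : ℕ) : ℂ) - k) (k + 1) /
          (((c + k)! : ℂ) * ((m - k)! : ℂ) * ((k : ℂ) + 1)) * asc ((k : ℂ) + 1) (m - k)
        * (((m : ℂ) + 1) * (((c + m)! : ℕ) : ℂ))
      = (((m + 1).choose (k + 1) : ℕ) : ℂ) * asc (b + ((m + 1 : ℕ) : ℂ) - k) (k + 1)
          * ((∏ j ∈ Finset.range (m - k), (c + k + 1 + j) : ℕ) : ℂ) := by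
    intro k hk
    have hkm : k ≤ m := Nat.lt_succ_iff.mp (Finset.mem_range.mp hk)
    have hβ : asc ((k : ℂ) + 1) (m - k) = ((∏ j ∈ Finset.range (m - k), (k + 1 + j) : ℕ) : ℂ) := by
      have : ((k : ℂ) + 1) = (((k + 1 : ℕ) : ℕ) : ℂ) := by push_cast; ring
      rw [this, asc_natCast]
    rw [hβ, div_mul_eq_mul_div, div_mul_eq_mul_div, div_eq_iff (by
      exact mul_ne_zero (mul_ne_zero (cast_factorial_ne _) (cast_factorial_ne _))
        (cast_succ_ne k))]
    have hnid := congrArg (Nat.cast : ℕ → ℂ) (nat_id c m k hkm)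
    push_cast at hnid
    push_cast
    linear_combination asc (b + ((m : ℂ) + 1) - k) (k + 1) * hnid
  rw [Finset.sum_congr rfl hterm]
  have hzero : 1 / (((c - 1)! : ℂ) * (((m + 1)! : ℕ) : ℂ)) * ((m ! : ℕ) : ℂ)
        * (((m : ℂ) + 1) * (((c + m)! : ℕ) : ℂ))
      = ((∏ j ∈ Finset.range (m + 1), (c + j) : ℕ) : ℂ) := by
    rw [div_mul_eq_mul_div, div_mul_eq_mul_div, div_eq_iff (by
      exact mul_ne_zero (cast_factorial_ne _) (cast_factorial_ne _))]
    have hnid := congrArg (Nat.cast : ℕ → ℂ) (nat_id0 c m hc)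
    push_cast at hnid
    push_cast
    linear_combination hnid
  rw [hzero, V, eq_comm, div_mul_eq_mul_div, div_eq_iff (by
    exact mul_ne_zero (cast_factorial_ne _) (cast_succ_ne m))]
  ring

end Stage5
section Stage6

lemma base_eval (c m : ℕ) (hc : 1 ≤ c) (b : ℂ) :
    (P1 c (m + 1) b + P2 c (m + 1) - P3 c (m + 1) b).eval 0 = 0 := by
  have h1 : (P1 c (m + 1) b).eval 0
      = ∑ k ∈ Finset.range (m + 1),
          asc (b + ((m + 1 : ℕ) : ℂ) - k) (k + 1) /
            (((c + k)! : ℂ) * ((m - k)! : ℂ) * ((k : ℂ) + 1)) * asc ((k : ℂ) + 1) (m - k) := by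
    rw [P1, Polynomial.eval_finset_sum]
    simp only [Nat.add_sub_cancel]
    refine Finset.sum_congr rfl fun k hk => ?_
    rw [eval_mul, eval_C, AP_eval, zero_add]
  have h2 : (P2 c (m + 1)).eval 0
      = 1 / (((c - 1)! : ℂ) * (((m + 1)! : ℕ) : ℂ)) * ((m ! : ℕ) : ℂ) := by
    rw [P2, eval_mul, eval_C, AP_deriv_eval_zero]
  have h3 : (P3 c (m + 1) b).eval 0
      = asc (b + c + ((m + 1 : ℕ) : ℂ)) (m + 1) / (((c + m)! : ℂ) * ((m : ℂ) + 1)) := by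
    rw [P3, Polynomial.eval_finset_sum]
    simp only [Nat.add_sub_cancel]
    rw [Finset.sum_eq_single_of_mem m (Finset.self_mem_range_succ m)]
    · rw [eval_mul, eval_C, AP_eval, Nat.sub_self]
      norm_num [asc_zero]
    · intro k hk hne
      have hk' : k < m := by
        have := Finset.mem_range.mp hk
        omega
      rw [eval_mul, AP_eval]
      have : asc (0 + 0) (m - k) = 0 := by
        rw [zero_add]
        exact asc_eq_zero _ (by omega)
      rw [this, mul_zero]
  rw [eval_sub, eval_add, h1, h2, h3, main_scalar c m hc b, sub_self]

theorem keyP (c : ℕ) (hc : 1 ≤ c) : ∀ (m : ℕ) (b : ℂ), P1 c m b + P2 c m - P3 c m b = 0 := by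
  intro m
  induction m with
  | zero =>
    intro b
    simp [P1, P2, P3, AP_zero]
  | succ m ih =>
    intro b
    apply poly_rigid
    · have h1 := P1_delta c m b
      have h2 := P2_delta c m
      have h3 := P3_delta c m b
      have hI := ih (b + 1)
      have hkey : (P1 c (m + 1) b + P2 c (m + 1) - P3 c (m + 1) b).comp (X + 1)
          - (P1 c (m + 1) b + P2 c (m + 1) - P3 c (m + 1) b)
          = (P1 c m (b + 1) + P2 c m - P3 c m (b + 1)).comp (X + 1) := by
        rw [sub_comp, add_comp, sub_comp, add_comp]
        linear_combination h1 + h2 - h3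
      rw [hI, zero_comp] at hkey
      exact sub_eq_zero.mp hkey
    · exact base_eval c m hc b

lemma AP_deriv_eval_harmonic (m : ℕ) (a : ℂ) (ha : ∀ k : ℕ, k < m → a + k ≠ 0) :
    (derivative (AP 0 m)).eval a = asc a m * ∑ k ∈ Finset.range m, 1 / (a + k) := by
  induction m with
  | zero => simp [AP_zero]
  | succ m ih =>
    rw [AP_succ, derivative_mul]
    simp only [derivative_add, derivative_X, derivative_C, add_zero, eval_add, eval_mul,
      eval_X, eval_C, mul_one]
    rw [ih (fun k hk => ha k (Nat.lt_succ_of_lt hk)), AP_eval, zero_add, add_zero]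
    rw [Finset.sum_range_succ, asc_succ]
    have ham : a + m ≠ 0 := ha m (Nat.lt_succ_self m)
    field_simp

lemma key_eval (c m : ℕ) (hc : 1 ≤ c) (b a : ℂ) (ha : ∀ k : ℕ, k < m → a + k ≠ 0) :
    (∑ k ∈ Finset.range m,
        asc (b + m - k) (k + 1) / (((c + k)! : ℂ) * ((m - 1 - k)! : ℂ) * ((k : ℂ) + 1))
          * asc (a + ((k : ℂ) + 1)) (m - 1 - k))
      + 1 / (((c - 1)! : ℂ) * ((m ! : ℕ) : ℂ)) * (asc a m * ∑ k ∈ Finset.range m, 1 / (a + k))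
      = ∑ k ∈ Finset.range m,
          asc (b + c + m) (k + 1) / (((c + k)! : ℂ) * ((m - 1 - k)! : ℂ) * ((k : ℂ) + 1))
            * asc a (m - 1 - k) := by
  have h := keyP c hc m b
  have h0 := congrArg (Polynomial.eval a) h
  rw [eval_sub, eval_add, P1, P2, P3, Polynomial.eval_finset_sum, Polynomial.eval_finset_sum,
    eval_mul, eval_C, eval_zero] at h0
  rw [AP_deriv_eval_harmonic m a ha] at h0
  have e1 : ∀ k ∈ Finset.range m,
      (C (asc (b + m - k) (k + 1) / (((c + k)! : ℂ) * ((m - 1 - k)! : ℂ) * ((k : ℂ) + 1)))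
        * AP ((k : ℂ) + 1) (m - 1 - k)).eval a
      = asc (b + m - k) (k + 1) / (((c + k)! : ℂ) * ((m - 1 - k)! : ℂ) * ((k : ℂ) + 1))
          * asc (a + ((k : ℂ) + 1)) (m - 1 - k) := by
    intro k _
    rw [eval_mul, eval_C, AP_eval]
  have e3 : ∀ k ∈ Finset.range m,
      (C (asc (b + c + m) (k + 1) / (((c + k)! : ℂ) * ((m - 1 - k)! : ℂ) * ((k : ℂ) + 1)))
        * AP 0 (m - 1 - k)).eval a
      = asc (b + c + m) (k + 1) / (((c + k)! : ℂ) * ((m - 1 - k)! : ℂ) * ((k : ℂ) + 1))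
          * asc a (m - 1 - k) := by
    intro k _
    rw [eval_mul, eval_C, AP_eval, add_zero]
  rw [Finset.sum_congr rfl e1, Finset.sum_congr rfl e3] at h0
  linear_combination h0

end Stage6
lemma asc_add (z : ℂ) (p q : ℕ) : asc z (p + q) = asc z p * asc (z + p) q := by
  rw [asc, asc, asc, Finset.prod_range_add]
  congr 1
  exact Finset.prod_congr rfl fun j _ => by push_cast; ring
theorem lemma3_sum_identity (m c : ℕ) (hm : 1 ≤ m) (hc : 1 ≤ c) (a b : ℂ)
    (ha : ∀ k : ℕ, a ≠ -(k : ℕ)) (hb : ∀ k : ℕ, b ≠ -(k + 1 : ℕ)) :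
    ∑ i ∈ Finset.Icc 1 m,
        1 / (Complex.Gamma ((c : ℂ) + i) * Complex.Gamma (a + i)
          * Complex.Gamma ((m : ℂ) - i + 1) * Complex.Gamma (b - i + m + 1) * i) =
      (1 / (Complex.Gamma a * Complex.Gamma (a + m) * Complex.Gamma (1 + b + m)
          * Complex.Gamma (b + c + m))) *
        ∑ i ∈ Finset.Icc 1 m,
          Complex.Gamma (a - i + m) * Complex.Gamma (b + c + i + m)
            / (Complex.Gamma ((c : ℂ) + i) * Complex.Gamma ((m : ℂ) - i + 1) * i)
      + (cdigamma a - cdigamma (a + m))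
          / (Complex.Gamma a * Complex.Gamma (c : ℂ) * Complex.Gamma ((m : ℂ) + 1)
            * Complex.Gamma (b + m + 1)) := by
  -- basic nonvanishing facts
  have haK : ∀ k : ℕ, a + k ≠ 0 := fun k h => ha k (by linear_combination h)
  have hbK : ∀ n : ℕ, b + n + 1 ≠ 0 := by
    intro n h
    apply hb n
    push_cast
    linear_combination h
  have hGa : Complex.Gamma a ≠ 0 := Complex.Gamma_ne_zero ha
  have hGb : Complex.Gamma (b + m + 1) ≠ 0 := by
    apply Complex.Gamma_ne_zero
    intro n h
    exact hbK (m + n) (by push_cast; linear_combination h)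
  have hGbc : Complex.Gamma (b + c + m) ≠ 0 := by
    apply Complex.Gamma_ne_zero
    intro n h
    refine hbK (n + c + m - 1) ?_
    push_cast [Nat.cast_sub (show 1 ≤ n + c + m by omega)]
    linear_combination h
  have hascam : asc a m ≠ 0 := asc_ne_zero (fun j _ => haK j)
  have hGam : Complex.Gamma (a + m) = Complex.Gamma a * asc a m :=
    Gamma_add_nat_s6 m (fun j _ => haK j)
  have hdig : cdigamma a - cdigamma (a + m) = -∑ k ∈ Finset.range m, 1 / (a + k) :=
    cdigamma_diff ha m
  have hGc : Complex.Gamma (c : ℂ) = (((c - 1)! : ℕ) : ℂ) := by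
    have h1 : ((c : ℕ) : ℂ) = ((c - 1 : ℕ) : ℂ) + 1 := by
      rw [show c = (c - 1) + 1 by omega]
      push_cast
      ring
    rw [h1, Complex.Gamma_nat_eq_factorial]
  have hGm1 : Complex.Gamma ((m : ℂ) + 1) = ((m ! : ℕ) : ℂ) := Complex.Gamma_nat_eq_factorial m
  have hD : Complex.Gamma a * Complex.Gamma (b + m + 1) * asc a m ≠ 0 :=
    mul_ne_zero (mul_ne_zero hGa hGb) hascam
  -- convert sums
  rw [show Finset.Icc 1 m = Finset.Ico 1 (m + 1) by rw [Finset.Ico_add_one_right_eq_Icc]]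
  simp only [Finset.sum_Ico_eq_sum_range, Nat.add_sub_cancel]
  -- LHS transformation
  have hLHS : ∑ k ∈ Finset.range m,
      1 / (Complex.Gamma (↑c + ↑(1 + k)) * Complex.Gamma (a + ↑(1 + k))
        * Complex.Gamma (↑m - ↑(1 + k) + 1) * Complex.Gamma (b - ↑(1 + k) + ↑m + 1) * ↑(1 + k))
      = (∑ k ∈ Finset.range m,
          asc (b + m - k) (k + 1) / (((c + k)! : ℂ) * ((m - 1 - k)! : ℂ) * ((k : ℂ) + 1))
            * asc (a + ((k : ℂ) + 1)) (m - 1 - k))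
        / (Complex.Gamma a * Complex.Gamma (b + m + 1) * asc a m) := by
    rw [Finset.sum_div]
    refine Finset.sum_congr rfl fun k hk => ?_
    have hkm : k < m := Finset.mem_range.mp hk
    have hmk' : ((m - 1 - k : ℕ) : ℂ) = (m : ℂ) - 1 - k := by
      rw [Nat.cast_sub (show k ≤ m - 1 by omega), Nat.cast_sub (show 1 ≤ m by omega)]
      push_cast
      ring
    have g1 : Complex.Gamma ((c : ℂ) + ↑(1 + k)) = (((c + k)! : ℕ) : ℂ) := by
      rw [show (c : ℂ) + ↑(1 + k) = ((c + k : ℕ) : ℂ) + 1 by push_cast; ring,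
        Complex.Gamma_nat_eq_factorial]
    have g2 : Complex.Gamma (a + ↑(1 + k)) = Complex.Gamma a * asc a (k + 1) := by
      rw [show a + ((1 + k : ℕ) : ℂ) = a + ((k + 1 : ℕ) : ℂ) by push_cast; ring]
      exact Gamma_add_nat_s6 (k + 1) (fun j _ => haK j)
    have g3 : Complex.Gamma ((m : ℂ) - ↑(1 + k) + 1) = (((m - 1 - k)! : ℕ) : ℂ) := by
      rw [show (m : ℂ) - ↑(1 + k) + 1 = ((m - 1 - k : ℕ) : ℂ) + 1 by
        rw [hmk']; push_cast; ring]
      exact Complex.Gamma_nat_eq_factorial _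
    have hbz : ∀ j : ℕ, j < k + 1 → b + (m : ℂ) - k + j ≠ 0 := by
      intro j hj h
      refine hbK (m - 1 - k + j) ?_
      push_cast [hmk']
      linear_combination h
    have hascb : asc (b + (m : ℂ) - k) (k + 1) ≠ 0 := asc_ne_zero hbz
    have g4 : Complex.Gamma (b + (m : ℂ) + 1)
        = Complex.Gamma (b - ↑(1 + k) + ↑m + 1) * asc (b + (m : ℂ) - k) (k + 1) := by
      have h := Gamma_add_nat_s6 (z := b + (m : ℂ) - k) (k + 1) hbz
      rw [show b + (m : ℂ) - k + ((k + 1 : ℕ) : ℂ) = b + m + 1 by push_cast; ring] at h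
      rw [h, show b - ((1 + k : ℕ) : ℂ) + m + 1 = b + (m : ℂ) - k by push_cast; ring]
    have hGz : Complex.Gamma (b - ↑(1 + k) + ↑m + 1) ≠ 0 := by
      apply Complex.Gamma_ne_zero
      intro n h
      refine hbK (m - 1 - k + n) ?_
      push_cast [hmk'] at h ⊢
      linear_combination h
    have g5 : asc a m = asc a (k + 1) * asc (a + ((k : ℂ) + 1)) (m - 1 - k) := by
      have h := asc_add a (k + 1) (m - 1 - k)
      rw [show (k + 1) + (m - 1 - k) = m by omega] at h
      rw [h]
      congr 2
      push_cast
      ring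
    have hasca1 : asc a (k + 1) ≠ 0 := asc_ne_zero (fun j _ => haK j)
    have hasca2 : asc (a + ((k : ℂ) + 1)) (m - 1 - k) ≠ 0 := by
      apply asc_ne_zero
      intro j _
      rw [show a + ((k : ℂ) + 1) + j = a + ((k + 1 + j : ℕ) : ℂ) by push_cast; ring]
      exact haK _
    have c1 : (((c + k)! : ℕ) : ℂ) ≠ 0 := cast_factorial_ne _
    have c2 : (((m - 1 - k)! : ℕ) : ℂ) ≠ 0 := cast_factorial_ne _
    have c3 : ((1 + k : ℕ) : ℂ) ≠ 0 := Nat.cast_ne_zero.mpr (by omega)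
    have c4 : ((k : ℂ) + 1) ≠ 0 := cast_succ_ne k
    rw [g1, g2, g3, g4, g5, div_mul_eq_mul_div, div_div,
      div_eq_div_iff (by apply_rules [mul_ne_zero, c1, c2, c3, hGa, hGz, hascb, hasca1, hasca2])
        (by apply_rules [mul_ne_zero, c1, c2, c3, c4, hGa, hGz, hascb, hasca1, hasca2])]
    push_cast
    ring
  -- RHS main-sum transformation
  have hRHS1 : (1 / (Complex.Gamma a * Complex.Gamma (a + ↑m) * Complex.Gamma (1 + b + ↑m)
        * Complex.Gamma (b + ↑c + ↑m))) *
      ∑ k ∈ Finset.range m,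
        Complex.Gamma (a - ↑(1 + k) + ↑m) * Complex.Gamma (b + ↑c + ↑(1 + k) + ↑m) /
          (Complex.Gamma (↑c + ↑(1 + k)) * Complex.Gamma (↑m - ↑(1 + k) + 1) * ↑(1 + k))
      = (∑ k ∈ Finset.range m,
          asc (b + c + m) (k + 1) / (((c + k)! : ℂ) * ((m - 1 - k)! : ℂ) * ((k : ℂ) + 1))
            * asc a (m - 1 - k))
        / (Complex.Gamma a * Complex.Gamma (b + m + 1) * asc a m) := by
    rw [Finset.mul_sum, Finset.sum_div]
    refine Finset.sum_congr rfl fun k hk => ?_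
    have hkm : k < m := Finset.mem_range.mp hk
    have hmk' : ((m - 1 - k : ℕ) : ℂ) = (m : ℂ) - 1 - k := by
      rw [Nat.cast_sub (show k ≤ m - 1 by omega), Nat.cast_sub (show 1 ≤ m by omega)]
      push_cast
      ring
    have g1 : Complex.Gamma ((c : ℂ) + ↑(1 + k)) = (((c + k)! : ℕ) : ℂ) := by
      rw [show (c : ℂ) + ↑(1 + k) = ((c + k : ℕ) : ℂ) + 1 by push_cast; ring,
        Complex.Gamma_nat_eq_factorial]
    have g3 : Complex.Gamma ((m : ℂ) - ↑(1 + k) + 1) = (((m - 1 - k)! : ℕ) : ℂ) := by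
      rw [show (m : ℂ) - ↑(1 + k) + 1 = ((m - 1 - k : ℕ) : ℂ) + 1 by
        rw [hmk']; push_cast; ring]
      exact Complex.Gamma_nat_eq_factorial _
    have g6 : Complex.Gamma (a - ↑(1 + k) + ↑m) = Complex.Gamma a * asc a (m - 1 - k) := by
      rw [show a - ((1 + k : ℕ) : ℂ) + m = a + ((m - 1 - k : ℕ) : ℂ) by
        rw [hmk']; push_cast; ring]
      exact Gamma_add_nat_s6 _ (fun j _ => haK j)
    have g7 : Complex.Gamma (b + ↑c + ↑(1 + k) + ↑m)
        = Complex.Gamma (b + ↑c + ↑m) * asc (b + c + m) (k + 1) := by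
      have h := Gamma_add_nat_s6 (z := b + (c : ℂ) + m) (k + 1) (fun j _ hj0 => by
        refine hbK (c + m + j - 1) ?_
        push_cast [Nat.cast_sub (show 1 ≤ c + m + j by omega)]
        linear_combination hj0)
      rw [show b + (c : ℂ) + m + ((k + 1 : ℕ) : ℂ) = b + ↑c + ↑(1 + k) + ↑m by push_cast; ring]
        at h
      rw [h]
    have g8 : Complex.Gamma (1 + b + (m : ℂ)) = Complex.Gamma (b + m + 1) := by
      rw [show 1 + b + (m : ℂ) = b + m + 1 by ring]
    have hasca3 : asc a (m - 1 - k) ≠ 0 := asc_ne_zero (fun j _ => haK j)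
    have hascbc : asc (b + (c : ℂ) + m) (k + 1) ≠ 0 := by
      apply asc_ne_zero
      intro j _ hj0
      refine hbK (c + m + j - 1) ?_
      push_cast [Nat.cast_sub (show 1 ≤ c + m + j by omega)]
      linear_combination hj0
    have c1 : (((c + k)! : ℕ) : ℂ) ≠ 0 := cast_factorial_ne _
    have c2 : (((m - 1 - k)! : ℕ) : ℂ) ≠ 0 := cast_factorial_ne _
    have c3 : ((1 + k : ℕ) : ℂ) ≠ 0 := Nat.cast_ne_zero.mpr (by omega)
    have c4 : ((k : ℂ) + 1) ≠ 0 := cast_succ_ne k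
    rw [g1, g3, g6, g7, g8, hGam, div_mul_div_comm, one_mul,
      div_mul_eq_mul_div, div_div,
      div_eq_div_iff (by apply_rules [mul_ne_zero, c1, c2, c3, hGa, hGb, hGbc, hascam,
          hasca3, hascbc])
        (by apply_rules [mul_ne_zero, c1, c2, c3, c4, hGa, hGb, hGbc, hascam, hasca3, hascbc])]
    push_cast
    ring
  -- the digamma term
  have hRHS2 : (cdigamma a - cdigamma (a + ↑m)) /
        (Complex.Gamma a * Complex.Gamma ↑c * Complex.Gamma (↑m + 1) * Complex.Gamma (b + ↑m + 1))
      = (-(1 / (((c - 1)! : ℂ) * ((m ! : ℕ) : ℂ))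
          * (asc a m * ∑ k ∈ Finset.range m, 1 / (a + k))))
        / (Complex.Gamma a * Complex.Gamma (b + m + 1) * asc a m) := by
    rw [hdig, hGc, hGm1]
    have c1 : (((c - 1)! : ℕ) : ℂ) ≠ 0 := cast_factorial_ne _
    have c2 : ((m ! : ℕ) : ℂ) ≠ 0 := cast_factorial_ne _
    field_simp
  rw [hLHS, hRHS1, hRHS2, ← add_div]
  congr 1
  have K := key_eval c m hc b a (fun k _ => haK k)
  linear_combination K
end

section
/- Let m be a positive integer and let a be a complex number with Re(a) ≥ 0. Then Σ_{i=1}^m (−1)^i · (Γ(a−i+m+1)/Γ(m−i+1)) · (1/(a−i+2m+1) − 1/i) = (Γ(a+m+1)/Γ(m+1)) · (ψ₀(a+2m+1) − ψ₀(a+m+1)). -/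
open Complex Finset

namespace Lemma5Aux

/-- The Pochhammer product `(a+1)(a+2)⋯(a+n)`. -/
noncomputable def pp (a : ℂ) (n : ℕ) : ℂ := ∏ j ∈ Finset.range n, (a + j + 1)

/-- The normalized summand. -/
noncomputable def uu (a : ℂ) (m i : ℕ) : ℂ :=
  (-1 : ℂ) ^ i * ((m.factorial : ℂ) / ((m - i).factorial : ℂ)) *
    (pp a (m - i) / pp a m) * (1 / (a + 2 * (m : ℂ) + 1 - (i : ℂ)) - 1 / (i : ℂ))

/-- The telescoping (Gosper/Zeilberger) certificate. -/
noncomputable def ww (a : ℂ) (m s : ℕ) : ℂ :=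
  (-1 : ℂ) ^ (s + 1) * ((m.factorial : ℂ) / ((m + 1 - s).factorial : ℂ)) *
    (pp a (m + 1 - s) / pp a (m + 1)) *
    ((a * (s : ℂ) - a ^ 2 - (2 * (m : ℂ) + 3) * a - ((m : ℂ) + 1)) /
      ((a + 2 * (m : ℂ) + 2 - (s : ℂ)) * (a + 2 * (m : ℂ) + 3 - (s : ℂ))))

lemma aden {a : ℂ} (ha : 0 ≤ a.re) {n : ℕ} (hn : n ≠ 0) : a + (n : ℂ) ≠ 0 := by
  intro h
  have h1 : (a + (n : ℂ)).re = 0 := by rw [h]; simp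
  have h2 : (1 : ℝ) ≤ (n : ℝ) := by exact_mod_cast Nat.one_le_iff_ne_zero.mpr hn
  simp only [Complex.add_re, Complex.natCast_re] at h1
  linarith

lemma aden1 {a : ℂ} (ha : 0 ≤ a.re) (n : ℕ) : a + (n : ℂ) + 1 ≠ 0 := fun h =>
  aden ha (n := n + 1) (Nat.succ_ne_zero n) (by push_cast; linear_combination h)

lemma pp_ne {a : ℂ} (ha : 0 ≤ a.re) (n : ℕ) : pp a n ≠ 0 :=
  Finset.prod_ne_zero_iff.mpr fun j _ => aden1 ha j

lemma pp_succ (a : ℂ) (n : ℕ) : pp a (n + 1) = pp a n * (a + (n : ℂ) + 1) :=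
  Finset.prod_range_succ _ _

lemma Gamma_pp {a : ℂ} (ha : 0 ≤ a.re) (n : ℕ) :
    Complex.Gamma (a + (n : ℂ) + 1) = pp a n * Complex.Gamma (a + 1) := by
  induction n with
  | zero => simp [pp]
  | succ n ih =>
    have h1 : a + ((n + 1 : ℕ) : ℂ) + 1 = (a + (n : ℂ) + 1) + 1 := by push_cast; ring
    rw [h1, Complex.Gamma_add_one _ (aden1 ha n), ih, pp_succ]
    ring

lemma icc_range (n : ℕ) (f : ℕ → ℂ) :
    ∑ k ∈ Icc 1 n, f k = ∑ j ∈ range n, f (1 + j) := by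
  rw [← Finset.Ico_add_one_right_eq_Icc, Finset.sum_Ico_eq_sum_range, Nat.add_sub_cancel]

set_option maxHeartbeats 1000000 in
lemma stepA {a : ℂ} (ha : 0 ≤ a.re) (k c : ℕ) :
    uu a (k + 1 + c + 1) (k + 1) - uu a (k + 1 + c) (k + 1) =
      ww a (k + 1 + c) (k + 1 + 1) - ww a (k + 1 + c) (k + 1) := by
  set G : ℂ := (-1 : ℂ) ^ k * (((k + 1 + c).factorial : ℂ) / (c.factorial : ℂ)) *
      (pp a c / pp a (k + 1 + c)) with hG
  have e1 : uu a (k + 1 + c) (k + 1) =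
      G * ((-1) * (1 / (a + ((k : ℂ) + 2 * (c : ℂ) + 2)) - 1 / ((k : ℂ) + 1))) := by
    rw [hG]; unfold uu
    rw [show k + 1 + c - (k + 1) = c from by omega]
    push_cast
    simp only [div_eq_mul_inv, mul_inv]
    ring
  have e2 : uu a (k + 1 + c + 1) (k + 1) =
      G * ((-1) * ((((k : ℂ) + (c : ℂ) + 2) * (a + (c : ℂ) + 1)) /
            ((((c : ℂ) + 1)) * (a + ((k : ℂ) + (c : ℂ) + 2)))) *
          (1 / (a + ((k : ℂ) + 2 * (c : ℂ) + 4)) - 1 / ((k : ℂ) + 1))) := by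
    rw [hG]; unfold uu
    rw [show k + 1 + c + 1 - (k + 1) = c + 1 from by omega, Nat.factorial_succ (k + 1 + c),
      Nat.factorial_succ c, pp_succ a c, pp_succ a (k + 1 + c)]
    push_cast
    simp only [div_eq_mul_inv, mul_inv]
    ring
  have e3 : ww a (k + 1 + c) (k + 1) =
      G * (((a + (c : ℂ) + 1) / ((((c : ℂ) + 1)) * (a + ((k : ℂ) + (c : ℂ) + 2)))) *
        ((a * ((k : ℂ) + 1) - a ^ 2 - (2 * ((k : ℂ) + 1 + (c : ℂ)) + 3) * a -
            (((k : ℂ) + 1 + (c : ℂ)) + 1)) /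
          ((a + ((k : ℂ) + 2 * (c : ℂ) + 3)) * (a + ((k : ℂ) + 2 * (c : ℂ) + 4))))) := by
    rw [hG]; unfold ww
    rw [show k + 1 + c + 1 - (k + 1) = c + 1 from by omega, Nat.factorial_succ c,
      pp_succ a c, pp_succ a (k + 1 + c)]
    push_cast
    simp only [div_eq_mul_inv, mul_inv]
    ring
  have e4 : ww a (k + 1 + c) (k + 1 + 1) =
      G * ((-1) * (1 / (a + ((k : ℂ) + (c : ℂ) + 2))) *
        ((a * ((k : ℂ) + 2) - a ^ 2 - (2 * ((k : ℂ) + 1 + (c : ℂ)) + 3) * a -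
            (((k : ℂ) + 1 + (c : ℂ)) + 1)) /
          ((a + ((k : ℂ) + 2 * (c : ℂ) + 2)) * (a + ((k : ℂ) + 2 * (c : ℂ) + 3))))) := by
    rw [hG]; unfold ww
    rw [show k + 1 + c + 1 - (k + 1 + 1) = c from by omega, pp_succ a (k + 1 + c)]
    push_cast
    simp only [div_eq_mul_inv, mul_inv]
    ring
  rw [e1, e2, e3, e4, ← mul_sub, ← mul_sub]
  congr 1
  have hK1 : (k : ℂ) + 1 ≠ 0 := Nat.cast_add_one_ne_zero k
  have hC1 : (c : ℂ) + 1 ≠ 0 := Nat.cast_add_one_ne_zero c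
  have d1 : a + ((k : ℂ) + 2 * (c : ℂ) + 2) ≠ 0 := fun h =>
    aden ha (n := k + 2 * c + 2) (by omega) (by push_cast; linear_combination h)
  have d2 : a + ((k : ℂ) + 2 * (c : ℂ) + 3) ≠ 0 := fun h =>
    aden ha (n := k + 2 * c + 3) (by omega) (by push_cast; linear_combination h)
  have d3 : a + ((k : ℂ) + 2 * (c : ℂ) + 4) ≠ 0 := fun h =>
    aden ha (n := k + 2 * c + 4) (by omega) (by push_cast; linear_combination h)
  have d4 : a + ((k : ℂ) + (c : ℂ) + 2) ≠ 0 := fun h =>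
    aden ha (n := k + c + 2) (by omega) (by push_cast; linear_combination h)
  have d1'' : a + ((k : ℂ) + (c : ℂ) * 2 + 2) ≠ 0 := fun h => d1 (by linear_combination h)
  have d2'' : a + ((k : ℂ) + (c : ℂ) * 2 + 3) ≠ 0 := fun h => d2 (by linear_combination h)
  have d3'' : a + ((k : ℂ) + (c : ℂ) * 2 + 4) ≠ 0 := fun h => d3 (by linear_combination h)
  field_simp
  ring

set_option maxHeartbeats 1000000 in
lemma stepB {a : ℂ} (ha : 0 ≤ a.re) (m : ℕ) :
    ww a m (m + 1) - ww a m 1 + uu a (m + 1) (m + 1) =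
      1 / (a + 2 * (m : ℂ) + 1) + 1 / (a + 2 * (m : ℂ) + 2) - 1 / (a + (m : ℂ) + 1) := by
  have hM1 : (m : ℂ) + 1 ≠ 0 := Nat.cast_add_one_ne_zero m
  have hF : (m.factorial : ℂ) ≠ 0 := Nat.cast_ne_zero.mpr (Nat.factorial_ne_zero _)
  have hPm : pp a m ≠ 0 := pp_ne ha _
  have d1 : a + ((m : ℂ) + 1) ≠ 0 := fun h =>
    aden ha (n := m + 1) (by omega) (by push_cast; linear_combination h)
  have d2 : a + ((m : ℂ) + 2) ≠ 0 := fun h =>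
    aden ha (n := m + 2) (by omega) (by push_cast; linear_combination h)
  have d3 : a + (2 * (m : ℂ) + 1) ≠ 0 := fun h =>
    aden ha (n := 2 * m + 1) (by omega) (by push_cast; linear_combination h)
  have d4 : a + (2 * (m : ℂ) + 2) ≠ 0 := fun h =>
    aden ha (n := 2 * m + 2) (by omega) (by push_cast; linear_combination h)
  have eB1 : ww a m (m + 1) =
      ((-1 : ℂ) ^ m * (m.factorial : ℂ) * (1 / (pp a m * (a + (m : ℂ) + 1)))) *
        ((a * ((m : ℂ) + 1) - a ^ 2 - (2 * (m : ℂ) + 3) * a - ((m : ℂ) + 1)) /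
          ((a + ((m : ℂ) + 1)) * (a + ((m : ℂ) + 2)))) := by
    unfold ww
    rw [show m + 1 - (m + 1) = 0 from by omega, pp_succ a m]
    simp only [pp, Finset.prod_range_zero, Nat.factorial_zero]
    push_cast
    simp only [div_eq_mul_inv, mul_inv]
    ring
  have eB3 : uu a (m + 1) (m + 1) =
      ((-1 : ℂ) ^ m * (m.factorial : ℂ) * (1 / (pp a m * (a + (m : ℂ) + 1)))) *
        ((-1) * ((m : ℂ) + 1) * (1 / (a + ((m : ℂ) + 2)) - 1 / ((m : ℂ) + 1))) := by
    unfold uu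
    rw [show m + 1 - (m + 1) = 0 from by omega, Nat.factorial_succ m, pp_succ a m]
    simp only [pp, Finset.prod_range_zero, Nat.factorial_zero]
    push_cast
    simp only [div_eq_mul_inv, mul_inv]
    ring
  have hB13 : ww a m (m + 1) + uu a (m + 1) (m + 1) = 0 := by
    rw [eB1, eB3, ← mul_add]
    apply mul_eq_zero_of_right
    field_simp
    ring
  have hB2 : -ww a m 1 =
      1 / (a + 2 * (m : ℂ) + 1) + 1 / (a + 2 * (m : ℂ) + 2) - 1 / (a + (m : ℂ) + 1) := by
    have eB2 : ww a m 1 =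
        ((m.factorial : ℂ) / (m.factorial : ℂ)) * (pp a m / (pp a m * (a + (m : ℂ) + 1))) *
          ((a - a ^ 2 - (2 * (m : ℂ) + 3) * a - ((m : ℂ) + 1)) /
            ((a + (2 * (m : ℂ) + 1)) * (a + (2 * (m : ℂ) + 2)))) := by
      unfold ww
      rw [show m + 1 - 1 = m from by omega, pp_succ a m]
      push_cast
      simp only [div_eq_mul_inv, mul_inv]
      ring
    rw [eB2]
    have d1' : a + (m : ℂ) + 1 ≠ 0 := fun h => d1 (by linear_combination h)
    have d3' : a + 2 * (m : ℂ) + 1 ≠ 0 := fun h => d3 (by linear_combination h)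
    have d4' : a + 2 * (m : ℂ) + 2 ≠ 0 := fun h => d4 (by linear_combination h)
    have d5 : a + ((m : ℂ) * 2 + 1) ≠ 0 := fun h => d3 (by linear_combination h)
    have d6 : a + 2 * ((m : ℂ) + 1) ≠ 0 := fun h => d4 (by linear_combination h)
    have d7 : a + (m : ℂ) * 2 + 1 ≠ 0 := fun h => d3 (by linear_combination h)
    have d8 : a + (m : ℂ) * 2 + 2 ≠ 0 := fun h => d4 (by linear_combination h)
    field_simp
    ring
  linear_combination hB13 + hB2

lemma main {a : ℂ} (ha : 0 ≤ a.re) : ∀ m : ℕ, 1 ≤ m →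
    ∑ i ∈ Icc 1 m, uu a m i = ∑ k ∈ Icc 1 m, 1 / (a + (m : ℂ) + (k : ℂ)) := by
  intro m
  induction m with
  | zero => intro h; exact absurd h (by omega)
  | succ n ih =>
    intro _
    by_cases hn : n = 0
    · subst hn
      simp only [Finset.Icc_self, Finset.sum_singleton]
      unfold uu
      simp only [pp, Finset.prod_range_one, Finset.prod_range_zero, Nat.factorial]
      have h1 : a + 1 ≠ 0 := fun h => aden ha (n := 1) (by omega) (by push_cast; linear_combination h)
      have h2 : a + 2 ≠ 0 := fun h => aden ha (n := 2) (by omega) (by push_cast; linear_combination h)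
      push_cast
      norm_num
      rw [show a + 1 + 1 = a + 2 from by ring]
      field_simp
      ring
    · have hn1 : 1 ≤ n := by omega
      have IH := ih hn1
      rw [Finset.sum_Icc_succ_top (by omega : 1 ≤ n + 1)]
      have hsplit : ∀ i ∈ Icc 1 n,
          uu a (n + 1) i = uu a n i + (ww a n (i + 1) - ww a n i) := by
        intro i hi
        rw [Finset.mem_Icc] at hi
        obtain ⟨k, rfl⟩ : ∃ k, i = k + 1 := ⟨i - 1, by omega⟩
        obtain ⟨c, rfl⟩ : ∃ c, n = k + 1 + c := ⟨n - (k + 1), by omega⟩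
        linear_combination stepA ha k c
      rw [Finset.sum_congr rfl hsplit, Finset.sum_add_distrib]
      have htel : ∑ i ∈ Icc 1 n, (ww a n (i + 1) - ww a n i) =
          ww a n (n + 1) - ww a n 1 := by
        rw [icc_range]
        have hc : ∀ j ∈ range n, ww a n (1 + j + 1) - ww a n (1 + j) =
            (fun t => ww a n (t + 1)) (j + 1) - (fun t => ww a n (t + 1)) j := by
          intro j _
          simp only [Nat.add_comm 1 j]
        rw [Finset.sum_congr rfl hc, Finset.sum_range_sub (fun t => ww a n (t + 1)) n]
      rw [IH, htel]
      have hB := stepB ha n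
      have hshift : ∑ k ∈ Icc 1 (n + 1), 1 / (a + ((n + 1 : ℕ) : ℂ) + (k : ℂ)) =
          ∑ k ∈ Icc 1 n, 1 / (a + (n : ℂ) + (k : ℂ)) +
            (1 / (a + 2 * (n : ℂ) + 1) + 1 / (a + 2 * (n : ℂ) + 2) - 1 / (a + (n : ℂ) + 1)) := by
        rw [Finset.sum_Icc_succ_top (by omega : 1 ≤ n + 1), icc_range, icc_range]
        have hc1 : ∀ j ∈ range n, (1 : ℂ) / (a + ((n + 1 : ℕ) : ℂ) + ((1 + j : ℕ) : ℂ)) =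
            (fun t : ℕ => 1 / (a + (n : ℂ) + 1 + (t : ℂ))) (j + 1) := by
          intro j _
          simp only
          congr 1
          push_cast
          ring
        have hc2 : ∀ j ∈ range n, (1 : ℂ) / (a + (n : ℂ) + ((1 + j : ℕ) : ℂ)) =
            (fun t : ℕ => 1 / (a + (n : ℂ) + 1 + (t : ℂ))) j := by
          intro j _
          simp only
          congr 1
          push_cast
          ring
        rw [Finset.sum_congr rfl hc1, Finset.sum_congr rfl hc2]
        have hts := Finset.sum_range_sub (fun t : ℕ => 1 / (a + (n : ℂ) + 1 + (t : ℂ))) n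
        rw [Finset.sum_sub_distrib] at hts
        have hv1 : (1 : ℂ) / (a + (n : ℂ) + 1 + ((n : ℕ) : ℂ)) = 1 / (a + 2 * (n : ℂ) + 1) := by
          congr 1; push_cast; ring
        have hv2 : (1 : ℂ) / (a + (n : ℂ) + 1 + ((0 : ℕ) : ℂ)) = 1 / (a + (n : ℂ) + 1) := by
          congr 1; push_cast; ring
        rw [hv1, hv2] at hts
        have hv3 : (1 : ℂ) / (a + ((n + 1 : ℕ) : ℂ) + ((n + 1 : ℕ) : ℂ)) =
            1 / (a + 2 * (n : ℂ) + 2) := by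
          congr 1; push_cast; ring
        rw [hv3]
        linear_combination hts
      rw [hshift]
      linear_combination hB

lemma dig_step {z : ℂ} (hz : 0 < z.re) : cdigamma (z + 1) = cdigamma z + 1 / z := by
  have hz0 : z ≠ 0 := fun h => by simp [h] at hz
  have hnat : ∀ n : ℕ, z ≠ -(n : ℂ) := by
    intro n h
    have h1 : z.re = -(n : ℝ) := by
      rw [h]; simp
    have h2 : (0 : ℝ) ≤ (n : ℝ) := Nat.cast_nonneg n
    linarith
  have hd : DifferentiableAt ℂ Complex.Gamma z := Complex.differentiableAt_Gamma z hnat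
  have hg : Complex.Gamma z ≠ 0 := Complex.Gamma_ne_zero hnat
  have h1 : deriv Complex.Gamma (z + 1) = Complex.Gamma z + z * deriv Complex.Gamma z := by
    have h2 : (fun w => Complex.Gamma (w + 1)) =ᶠ[nhds z] fun w => w * Complex.Gamma w := by
      filter_upwards [eventually_ne_nhds hz0] with w hw
      exact Complex.Gamma_add_one w hw
    calc deriv Complex.Gamma (z + 1) = deriv (fun w => Complex.Gamma (w + 1)) z := by
          rw [deriv_comp_add_const]
      _ = deriv (fun w => w * Complex.Gamma w) z := h2.deriv_eq
      _ = 1 * Complex.Gamma z + z * deriv Complex.Gamma z :=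
          ((hasDerivAt_id z).mul hd.hasDerivAt).deriv
      _ = Complex.Gamma z + z * deriv Complex.Gamma z := by ring
  have hΓ1 : Complex.Gamma (z + 1) = z * Complex.Gamma z := Complex.Gamma_add_one z hz0
  unfold cdigamma
  rw [h1, hΓ1]
  field_simp
  ring

lemma dig_shift {z : ℂ} (hz : 0 < z.re) (n : ℕ) :
    cdigamma (z + (n : ℂ)) = cdigamma z + ∑ j ∈ range n, 1 / (z + (j : ℂ)) := by
  induction n with
  | zero => simp
  | succ n ih =>
    have hzn : 0 < (z + (n : ℂ)).re := by
      simp only [Complex.add_re, Complex.natCast_re]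
      have : (0 : ℝ) ≤ (n : ℝ) := Nat.cast_nonneg n
      linarith
    have h1 : z + ((n + 1 : ℕ) : ℂ) = (z + (n : ℂ)) + 1 := by push_cast; ring
    rw [h1, dig_step hzn, ih, Finset.sum_range_succ]
    ring

lemma dig_diff {a : ℂ} (ha : 0 ≤ a.re) (m : ℕ) :
    cdigamma (a + 2 * (m : ℂ) + 1) - cdigamma (a + (m : ℂ) + 1) =
      ∑ k ∈ Icc 1 m, 1 / (a + (m : ℂ) + (k : ℂ)) := by
  have hz : 0 < (a + (m : ℂ) + 1).re := by
    simp only [Complex.add_re, Complex.natCast_re, Complex.one_re]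
    have : (0 : ℝ) ≤ (m : ℝ) := Nat.cast_nonneg m
    linarith
  have h1 : a + 2 * (m : ℂ) + 1 = (a + (m : ℂ) + 1) + (m : ℂ) := by ring
  rw [h1, dig_shift hz m, icc_range]
  have hc : ∀ j ∈ range m, (1 : ℂ) / (a + (m : ℂ) + ((1 + j : ℕ) : ℂ)) =
      1 / ((a + (m : ℂ) + 1) + (j : ℂ)) := by
    intro j _
    congr 1
    push_cast
    ring
  rw [Finset.sum_congr rfl hc]
  ring

end Lemma5Aux

open Lemma5Aux in
theorem lemma5_special_case (m : ℕ) (hm : 1 ≤ m) (a : ℂ) (ha : 0 ≤ a.re) :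
    ∑ i ∈ Finset.Icc 1 m,
        (-1 : ℂ) ^ i * (Complex.Gamma (a - i + m + 1) / Complex.Gamma ((m : ℂ) - i + 1))
          * (1 / (a - i + 2 * m + 1) - 1 / i) =
      (Complex.Gamma (a + m + 1) / Complex.Gamma ((m : ℂ) + 1)) *
        (cdigamma (a + 2 * m + 1) - cdigamma (a + m + 1)) := by
  have key := main ha m hm
  have hL : ∀ i ∈ Icc 1 m,
      (-1 : ℂ) ^ i * (Complex.Gamma (a - i + m + 1) / Complex.Gamma ((m : ℂ) - i + 1))
          * (1 / (a - i + 2 * m + 1) - 1 / i) =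
        Complex.Gamma (a + 1) * (pp a m / (m.factorial : ℂ)) * uu a m i := by
    intro i hi
    rw [Finset.mem_Icc] at hi
    have him : i ≤ m := hi.2
    have e1 : a - (i : ℂ) + (m : ℂ) + 1 = a + (((m - i : ℕ)) : ℂ) + 1 := by
      rw [Nat.cast_sub him]; ring
    have e2 : (m : ℂ) - (i : ℂ) + 1 = (((m - i : ℕ)) : ℂ) + 1 := by
      rw [Nat.cast_sub him]
    rw [e1, e2, Gamma_pp ha (m - i), Complex.Gamma_nat_eq_factorial]
    unfold uu
    have hfac : ((m - i).factorial : ℂ) ≠ 0 := Nat.cast_ne_zero.mpr (Nat.factorial_ne_zero _)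
    have hmfac : (m.factorial : ℂ) ≠ 0 := Nat.cast_ne_zero.mpr (Nat.factorial_ne_zero _)
    have hpm : pp a m ≠ 0 := pp_ne ha m
    have hi0 : (i : ℂ) ≠ 0 := Nat.cast_ne_zero.mpr (by omega)
    have hd : a + 2 * (m : ℂ) + 1 - (i : ℂ) ≠ 0 := fun h =>
      aden ha (n := 2 * m + 1 - i) (by omega)
        (by push_cast [Nat.cast_sub (by omega : i ≤ 2 * m + 1)]; linear_combination h)
    have hd2 : a - (i : ℂ) + 2 * (m : ℂ) + 1 ≠ 0 := fun h => hd (by linear_combination h)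
    field_simp
    ring
  rw [Finset.sum_congr rfl hL, ← Finset.mul_sum, key]
  rw [show a + (m : ℂ) + 1 = a + ((m : ℕ) : ℂ) + 1 from rfl, Gamma_pp ha m,
    Complex.Gamma_nat_eq_factorial, dig_diff ha m]
  ring
end

section
/- Let m be a positive integer and let a₁, b₁, c₁, d₁ be complex numbers none of which is a nonpositive integer. Then (c₁−b₁) · Σ_{j=1}^m Φ_{a₁,b₁+1,c₁,d₁+1}^{(m−j)} + (d₁−a₁+1) · Σ_{j=1}^m Φ_{a₁,b₁,c₁,d₁}^{(m−j)} = Φ_{a₁−1,b₁,c₁,d₁}^{(m)} − Φ_{a₁−1,b₁,c₁,d₁}^{(0)}. -/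
open Complex Finset

/-- `Φ_{α,β,γ,δ}^{(x)} = Γ(x+γ+1)·Γ(x+δ+1)/(Γ(x+α+1)·Γ(x+β+1))`. -/
noncomputable def PhiG (p q r s x : ℂ) : ℂ :=
  Complex.Gamma (x + r + 1) * Complex.Gamma (x + s + 1) /
    (Complex.Gamma (x + p + 1) * Complex.Gamma (x + q + 1))

lemma shift_ne (z : ℂ) (hz : ∀ k : ℕ, z ≠ -(k : ℕ)) (n : ℕ) : (n : ℂ) + z ≠ 0 := by
  intro h
  exact hz n (by linear_combination h)

lemma shift_gamma_ne (z : ℂ) (hz : ∀ k : ℕ, z ≠ -(k : ℕ)) (n : ℕ) :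
    Complex.Gamma ((n : ℂ) + z) ≠ 0 := by
  apply Complex.Gamma_ne_zero
  intro k h
  apply hz (k + n)
  push_cast
  linear_combination h

lemma succ_shift (z : ℂ) (hz : ∀ k : ℕ, z ≠ -(k : ℕ)) : ∀ k : ℕ, z + 1 ≠ -(k : ℕ) := by
  intro k h
  apply hz (k + 1)
  push_cast
  linear_combination h

lemma key_step (a₁ b₁ c₁ d₁ : ℂ)
    (ha : ∀ k : ℕ, a₁ ≠ -(k : ℕ)) (hb : ∀ k : ℕ, b₁ ≠ -(k : ℕ))
    (hc : ∀ k : ℕ, c₁ ≠ -(k : ℕ)) (hd : ∀ k : ℕ, d₁ ≠ -(k : ℕ)) (n : ℕ) :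
    (c₁ - b₁) * PhiG a₁ (b₁ + 1) c₁ (d₁ + 1) (n : ℂ)
      + (d₁ - a₁ + 1) * PhiG a₁ b₁ c₁ d₁ (n : ℂ) =
      PhiG (a₁ - 1) b₁ c₁ d₁ ((n : ℂ) + 1) - PhiG (a₁ - 1) b₁ c₁ d₁ (n : ℂ) := by
  have hb' := succ_shift b₁ hb
  have hc' := succ_shift c₁ hc
  have hd' := succ_shift d₁ hd
  have hA : (n : ℂ) + a₁ ≠ 0 := shift_ne a₁ ha n
  have hB : (n : ℂ) + b₁ + 1 ≠ 0 := by
    have := shift_ne (b₁ + 1) hb' n; rwa [← add_assoc] at this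
  have hC : (n : ℂ) + c₁ + 1 ≠ 0 := by
    have := shift_ne (c₁ + 1) hc' n; rwa [← add_assoc] at this
  have hD : (n : ℂ) + d₁ + 1 ≠ 0 := by
    have := shift_ne (d₁ + 1) hd' n; rwa [← add_assoc] at this
  have hGA : Complex.Gamma ((n : ℂ) + a₁) ≠ 0 := shift_gamma_ne a₁ ha n
  have hGB : Complex.Gamma ((n : ℂ) + b₁ + 1) ≠ 0 := by
    have := shift_gamma_ne (b₁ + 1) hb' n; rwa [← add_assoc] at this
  have hGC : Complex.Gamma ((n : ℂ) + c₁ + 1) ≠ 0 := by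
    have := shift_gamma_ne (c₁ + 1) hc' n; rwa [← add_assoc] at this
  have hGD : Complex.Gamma ((n : ℂ) + d₁ + 1) ≠ 0 := by
    have := shift_gamma_ne (d₁ + 1) hd' n; rwa [← add_assoc] at this
  simp only [PhiG]
  rw [show (n : ℂ) + (d₁ + 1) + 1 = ((n : ℂ) + d₁ + 1) + 1 by ring,
    Complex.Gamma_add_one _ hD,
    show (n : ℂ) + (b₁ + 1) + 1 = ((n : ℂ) + b₁ + 1) + 1 by ring,
    Complex.Gamma_add_one _ hB,
    show (n : ℂ) + a₁ + 1 = ((n : ℂ) + a₁) + 1 by ring,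
    Complex.Gamma_add_one _ hA,
    show (n : ℂ) + 1 + c₁ + 1 = ((n : ℂ) + c₁ + 1) + 1 by ring,
    Complex.Gamma_add_one _ hC,
    show (n : ℂ) + 1 + d₁ + 1 = ((n : ℂ) + d₁ + 1) + 1 by ring,
    Complex.Gamma_add_one _ hD,
    show (n : ℂ) + 1 + (a₁ - 1) + 1 = ((n : ℂ) + a₁) + 1 by ring,
    Complex.Gamma_add_one _ hA,
    show (n : ℂ) + 1 + b₁ + 1 = ((n : ℂ) + b₁ + 1) + 1 by ring,
    Complex.Gamma_add_one _ hB,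
    show (n : ℂ) + (a₁ - 1) + 1 = (n : ℂ) + a₁ by ring]
  field_simp
  ring

theorem phi_recurrence_identity (m : ℕ) (hm : 1 ≤ m) (a₁ b₁ c₁ d₁ : ℂ)
    (ha : ∀ k : ℕ, a₁ ≠ -(k : ℕ)) (hb : ∀ k : ℕ, b₁ ≠ -(k : ℕ))
    (hc : ∀ k : ℕ, c₁ ≠ -(k : ℕ)) (hd : ∀ k : ℕ, d₁ ≠ -(k : ℕ)) :
    (c₁ - b₁) * ∑ j ∈ Finset.Icc 1 m, PhiG a₁ (b₁ + 1) c₁ (d₁ + 1) ((m : ℂ) - j)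
      + (d₁ - a₁ + 1) * ∑ j ∈ Finset.Icc 1 m, PhiG a₁ b₁ c₁ d₁ ((m : ℂ) - j) =
      PhiG (a₁ - 1) b₁ c₁ d₁ (m : ℂ) - PhiG (a₁ - 1) b₁ c₁ d₁ 0 := by
  set F : ℕ → ℂ := fun n => PhiG (a₁ - 1) b₁ c₁ d₁ (n : ℂ) with hF
  rw [Finset.mul_sum, Finset.mul_sum, ← Finset.sum_add_distrib]
  have hsum : ∑ j ∈ Finset.Icc 1 m,
      ((c₁ - b₁) * PhiG a₁ (b₁ + 1) c₁ (d₁ + 1) ((m : ℂ) - j)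
        + (d₁ - a₁ + 1) * PhiG a₁ b₁ c₁ d₁ ((m : ℂ) - j)) =
      ∑ j ∈ Finset.Icc 1 m, (F (m - j + 1) - F (m - j)) := by
    apply Finset.sum_congr rfl
    intro j hj
    obtain ⟨hj1, hj2⟩ := Finset.mem_Icc.mp hj
    have hcast : ((m : ℂ) - j) = ((m - j : ℕ) : ℂ) := by
      rw [Nat.cast_sub hj2]
    rw [hcast, key_step a₁ b₁ c₁ d₁ ha hb hc hd (m - j), hF]
    push_cast
    ring_nf
  rw [hsum]
  have hre : ∑ j ∈ Finset.Icc 1 m, (F (m - j + 1) - F (m - j)) =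
      ∑ i ∈ Finset.range m, (F (i + 1) - F i) := by
    rw [← Finset.sum_range_reflect]
    rw [show Finset.Icc 1 m = Finset.image (· + 1) (Finset.range m) by
      ext x
      simp only [Finset.mem_Icc, Finset.mem_image, Finset.mem_range]
      constructor
      · rintro ⟨h1, h2⟩; exact ⟨x - 1, by omega, by omega⟩
      · rintro ⟨a, ha, rfl⟩; omega]
    rw [Finset.sum_image (by intro x _ y _ h; simp only at h; omega)]
    apply Finset.sum_congr rfl
    intro i hi
    have hi' : i < m := Finset.mem_range.mp hi
    congr 2 <;> omega
  rw [hre, Finset.sum_range_sub]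
  simp [hF]
end

section
/- Let a, b, m be positive integers. Then Σ_{i=1}^m ψ₀(a+b+i)/i = Σ_{i=1}^m ψ₀(b+i)/i − Σ_{i=1}^a ψ₀(b+i+m)/(b+i−1) + (1/2)·( (ψ₀(a+b) − ψ₀(b))·(ψ₀(a+b) + ψ₀(b) + 2(ψ₀(m+1) − ψ₀(1))) − ψ₁(a+b) + ψ₁(b) ). -/
open Real Finset

/-- Digamma function at a positive integer: `ψ₀(k) = -γ + Σ_{j=1}^{k-1} 1/j`. -/
noncomputable def psi0 (k : ℕ) : ℝ :=
  -Real.eulerMascheroniConstant + ∑ j ∈ Finset.range (k - 1), 1 / (j + 1 : ℝ)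

/-- Trigamma function at a positive integer: `ψ₁(k) = π²/6 - Σ_{j=1}^{k-1} 1/j²`. -/
noncomputable def psi1 (k : ℕ) : ℝ :=
  Real.pi ^ 2 / 6 - ∑ j ∈ Finset.range (k - 1), 1 / ((j + 1 : ℝ)) ^ 2

/-- Harmonic number `H n = Σ_{j=1}^n 1/j`. -/
noncomputable def Hsum (n : ℕ) : ℝ := ∑ j ∈ Finset.range n, 1 / (j + 1 : ℝ)

lemma psi0_succ (k : ℕ) (hk : 1 ≤ k) : psi0 (k + 1) = psi0 k + 1 / k := by
  obtain ⟨n, rfl⟩ := Nat.exists_eq_add_of_le hk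
  rw [show 1 + n = n + 1 from Nat.add_comm 1 n]
  simp [psi0, Finset.sum_range_succ]
  ring

lemma psi1_succ (k : ℕ) (hk : 1 ≤ k) : psi1 (k + 1) = psi1 k - 1 / (k : ℝ) ^ 2 := by
  obtain ⟨n, rfl⟩ := Nat.exists_eq_add_of_le hk
  rw [show 1 + n = n + 1 from Nat.add_comm 1 n]
  simp [psi1, Finset.sum_range_succ]
  ring

lemma psi0_H (m : ℕ) : psi0 (m + 1) - psi0 1 = Hsum m := by
  simp [psi0, Hsum]

lemma sumlem (c : ℕ) (hc : 1 ≤ c) (m : ℕ) :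
    ∑ i ∈ Finset.Icc 1 m, (psi0 (c + 1 + i) - psi0 (c + i)) / i
      = 1 / c * (Hsum m + psi0 (c + 1) - psi0 (c + 1 + m)) := by
  have hc0 : (c : ℝ) ≠ 0 := by positivity
  induction m with
  | zero => simp [Hsum]
  | succ n ih =>
    rw [Finset.sum_Icc_succ_top (by omega), ih]
    have h1 : psi0 (c + 1 + (n + 1)) = psi0 (c + 1 + n) + 1 / ((c : ℝ) + n + 1) := by
      have := psi0_succ (c + 1 + n) (by omega)
      rw [show c + 1 + n + 1 = c + 1 + (n + 1) from by omega] at this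
      rw [this]; push_cast; ring
    have h4 : psi0 (c + (n + 1)) = psi0 (c + 1 + n) := by
      rw [show c + (n + 1) = c + 1 + n from by omega]
    have h2 : Hsum (n + 1) = Hsum n + 1 / ((n : ℝ) + 1) := by
      simp [Hsum, Finset.sum_range_succ]
    rw [h1, h2, h4]
    have hn1 : ((n : ℝ) + 1) ≠ 0 := by positivity
    have hcn : ((c : ℝ) + n + 1) ≠ 0 := by positivity
    push_cast
    field_simp
    ring

theorem digamma_sum_shift_identity (a b m : ℕ) (ha : 1 ≤ a) (hb : 1 ≤ b) (hm : 1 ≤ m) :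
    ∑ i ∈ Finset.Icc 1 m, psi0 (a + b + i) / i =
      ∑ i ∈ Finset.Icc 1 m, psi0 (b + i) / i
        - ∑ i ∈ Finset.Icc 1 a, psi0 (b + i + m) / ((b : ℝ) + i - 1)
        + 1 / 2 * ((psi0 (a + b) - psi0 b)
            * (psi0 (a + b) + psi0 b + 2 * (psi0 (m + 1) - psi0 1))
          - psi1 (a + b) + psi1 b) := by
  induction a, ha using Nat.le_induction with
  | base =>
    have hb0 : (b : ℝ) ≠ 0 := by positivity
    have key := sumlem b hb m
    have split : ∀ i ∈ Finset.Icc 1 m, psi0 (1 + b + i) / (i : ℝ)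
        = psi0 (b + i) / i + (psi0 (b + 1 + i) - psi0 (b + i)) / i := by
      intro i _
      rw [show 1 + b + i = b + 1 + i from by omega]; ring
    rw [Finset.sum_congr rfl split, Finset.sum_add_distrib, key]
    rw [show (Finset.Icc 1 1) = {1} from rfl, Finset.sum_singleton]
    rw [psi0_H m, show (1 : ℕ) + b = b + 1 from Nat.add_comm 1 b,
        psi0_succ b hb, psi1_succ b hb]
    push_cast
    field_simp
    ring_nf
    field_simp
  | succ a ha ih =>
    have hc : 1 ≤ a + b := by omega
    have hc0 : ((a : ℝ) + b) ≠ 0 := by positivity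
    have key := sumlem (a + b) hc m
    have split : ∀ i ∈ Finset.Icc 1 m, psi0 (a + 1 + b + i) / (i : ℝ)
        = psi0 (a + b + i) / i + (psi0 (a + b + 1 + i) - psi0 (a + b + i)) / i := by
      intro i _
      rw [show a + 1 + b + i = a + b + 1 + i from by omega]; ring
    rw [Finset.sum_congr rfl split, Finset.sum_add_distrib, key, ih]
    rw [Finset.sum_Icc_succ_top (by omega : 1 ≤ a + 1)]
    rw [show b + (a + 1) + m = a + b + 1 + m from by omega]
    rw [show a + 1 + b = a + b + 1 from by omega]
    rw [psi0_succ (a + b) hc, psi1_succ (a + b) hc, psi0_H m]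
    have hd0 : (b : ℝ) + ((a : ℝ) + 1) - 1 ≠ 0 := by
      intro h; apply hc0; linarith
    push_cast
    rw [show (b : ℝ) + ((a : ℝ) + 1) - 1 = (a : ℝ) + (b : ℝ) from by ring]
    field_simp
    ring
end

section
/- Let m be a positive integer and let a, b be real numbers with a > 0, b > 0 and a ≠ b. Then Σ_{i=1}^m ( ψ₀(a+b+i+m)/(b+i) + ψ₀(a+i)/(b+i) + ψ₀(a+b+2i)/(a+i) − ψ₀(a+b+i)/(a+i) − ψ₀(a+b+2i)/(b+i) ) = ψ₀(a/2 + b/2 + m)/(b−a) − (a+b+m)·ψ₀(a+b+m)/(b(a+m)) + ψ₀(a+b+2m)/(a+m) + ψ₀(a+m)·( ψ₀(b+m+1) − ψ₀(b) − 1/(b−a) ) + a·ψ₀(a)/(b(b−a)) + ψ₀(a+b)/b − ψ₀(a/2 + b/2)/(b−a). -/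
open Real Finset

noncomputable def rdigamma (x : ℝ) : ℝ := deriv Real.Gamma x / Real.Gamma x

lemma diffGamma {x : ℝ} (hx : 0 < x) : DifferentiableAt ℝ Real.Gamma x := by
  apply Real.differentiableAt_Gamma
  intro n
  have : -(n:ℝ) ≤ 0 := neg_nonpos.mpr (Nat.cast_nonneg n)
  linarith

lemma rdigamma_add_one {x : ℝ} (hx : 0 < x) :
    rdigamma (x + 1) = rdigamma x + 1 / x := by
  have hx1 : (0:ℝ) < x + 1 := by linarith
  have hΓ : 0 < Real.Gamma x := Real.Gamma_pos_of_pos hx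
  have h1 : HasDerivAt (fun y => Real.Gamma (y + 1)) (deriv Real.Gamma (x + 1)) x := by
    have := ((diffGamma hx1).hasDerivAt).comp x ((hasDerivAt_id x).add_const 1)
    simpa [Function.comp_def] using this
  have h2 : HasDerivAt (fun y => y * Real.Gamma y)
      (1 * Real.Gamma x + x * deriv Real.Gamma x) x :=
    (hasDerivAt_id x).mul (diffGamma hx).hasDerivAt
  have hev : (fun y => Real.Gamma (y + 1)) =ᶠ[nhds x] fun y => y * Real.Gamma y := by
    filter_upwards [eventually_gt_nhds hx] with y hy
    rw [Real.Gamma_add_one hy.ne']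
  have h3 : deriv Real.Gamma (x + 1) = Real.Gamma x + x * deriv Real.Gamma x := by
    have := (h1.congr_of_eventuallyEq hev.symm).unique h2
    linarith [this]
  unfold rdigamma
  rw [h3, Real.Gamma_add_one hx.ne']
  field_simp
  ring

lemma sum_inv (x : ℝ) (hx : 0 < x) (m : ℕ) :
    ∑ i ∈ Finset.Icc 1 m, 1/(x + i) = rdigamma (x + m + 1) - rdigamma (x + 1) := by
  induction m with
  | zero => simp
  | succ k ih =>
    rw [Finset.sum_Icc_succ_top (by omega), ih]
    have h : (0:ℝ) < x + k + 1 := by positivity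
    have hh := rdigamma_add_one h
    push_cast
    rw [show x + ((k:ℝ)+1) + 1 = (x + k + 1) + 1 by ring, hh]
    ring

set_option maxHeartbeats 2000000 in
theorem digamma_double_sum_identity (m : ℕ) (hm : 1 ≤ m) (a b : ℝ)
    (ha : 0 < a) (hb : 0 < b) (hab : a ≠ b) :
    ∑ i ∈ Finset.Icc 1 m,
        (rdigamma (a + b + i + m) / (b + i) + rdigamma (a + i) / (b + i)
          + rdigamma (a + b + 2 * i) / (a + i) - rdigamma (a + b + i) / (a + i)
          - rdigamma (a + b + 2 * i) / (b + i)) =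
      rdigamma (a / 2 + b / 2 + m) / (b - a)
        - (a + b + m) * rdigamma (a + b + m) / (b * (a + m))
        + rdigamma (a + b + 2 * m) / (a + m)
        + rdigamma (a + m) * (rdigamma (b + m + 1) - rdigamma b - 1 / (b - a))
        + a * rdigamma a / (b * (b - a)) + rdigamma (a + b) / b
        - rdigamma (a / 2 + b / 2) / (b - a) := by
  have hba : b - a ≠ 0 := sub_ne_zero.mpr (Ne.symm hab)
  induction m, hm using Nat.le_induction with
  | base =>
    rw [Finset.Icc_self, Finset.sum_singleton]
    push_cast
    have hb1 : (b:ℝ) + 1 ≠ 0 := by positivity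
    have hab0 : a + b ≠ 0 := by positivity
    have hab1 : a + b + 1 ≠ 0 := by positivity
    have hhalf : a/2 + b/2 ≠ 0 := by positivity
    have e1 : rdigamma (a+1) = rdigamma a + 1/a := rdigamma_add_one ha
    have e2 : rdigamma (a+b+1) = rdigamma (a+b) + 1/(a+b) := rdigamma_add_one (by positivity)
    have e3 : rdigamma (a+b+1+1) = rdigamma (a+b+1) + 1/(a+b+1) := rdigamma_add_one (by positivity)
    have e4 : rdigamma (a/2+b/2+1) = rdigamma (a/2+b/2) + 1/(a/2+b/2) := rdigamma_add_one (by positivity)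
    have e5 : rdigamma (b+1) = rdigamma b + 1/b := rdigamma_add_one hb
    have e6 : rdigamma (b+1+1) = rdigamma (b+1) + 1/(b+1) := rdigamma_add_one (by positivity)
    rw [show a + b + 2*(1:ℝ) = a+b+1+1 by ring, e3, e2, e1, e4, e6, e5]
    field_simp
    ring
  | succ n hn ih =>
    have hsplit : ∑ i ∈ Finset.Icc 1 n,
        (rdigamma (a + b + ↑i + ((n:ℝ)+1)) / (b + ↑i) + rdigamma (a + ↑i) / (b + ↑i) +
            rdigamma (a + b + 2 * ↑i) / (a + ↑i) - rdigamma (a + b + ↑i) / (a + ↑i) -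
          rdigamma (a + b + 2 * ↑i) / (b + ↑i)) =
        (∑ i ∈ Finset.Icc 1 n,
        (rdigamma (a + b + ↑i + (n:ℝ)) / (b + ↑i) + rdigamma (a + ↑i) / (b + ↑i) +
            rdigamma (a + b + 2 * ↑i) / (a + ↑i) - rdigamma (a + b + ↑i) / (a + ↑i) -
          rdigamma (a + b + 2 * ↑i) / (b + ↑i)))
        + (1/(a+(n:ℝ))) * ((rdigamma (b + (n:ℝ) + 1) - rdigamma (b+1))
            - (rdigamma (a + b + (n:ℝ) + (n:ℝ) + 1) - rdigamma (a + b + (n:ℝ) + 1))) := by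
      rw [← sum_inv b hb n, ← sum_inv (a+b+(n:ℝ)) (by positivity) n,
        ← Finset.sum_sub_distrib, Finset.mul_sum, ← Finset.sum_add_distrib]
      apply Finset.sum_congr rfl
      intro i hi
      have h1 : (0:ℝ) < a + b + i + n := by positivity
      rw [show a + b + (i:ℝ) + ((n:ℝ)+1) = (a + b + (i:ℝ) + (n:ℝ)) + 1 by ring,
        rdigamma_add_one h1]
      have d1 : b + (i:ℝ) ≠ 0 := by positivity
      have d2 : a + (n:ℝ) ≠ 0 := by positivity
      have d3 : a + b + (i:ℝ) + (n:ℝ) ≠ 0 := by positivity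
      have d4 : a + b + (n:ℝ) + (i:ℝ) ≠ 0 := by positivity
      field_simp
      ring
    push_cast
    rw [Finset.sum_Icc_succ_top (by omega : 1 ≤ n + 1)]
    push_cast
    rw [hsplit, ih]
    -- normalize digamma arguments
    rw [show a + b + ((n:ℝ)+1) + ((n:ℝ)+1) = a + b + 2*(n:ℝ) + 1 + 1 by ring,
        show a + b + 2*((n:ℝ)+1) = a + b + 2*(n:ℝ) + 1 + 1 by ring,
        show a + b + ((n:ℝ)+1) = a + b + (n:ℝ) + 1 by ring,
        show b + ((n:ℝ)+1) + 1 = b + (n:ℝ) + 1 + 1 by ring,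
        show a / 2 + b / 2 + ((n:ℝ)+1) = a / 2 + b / 2 + (n:ℝ) + 1 by ring,
        show a + ((n:ℝ)+1) = a + (n:ℝ) + 1 by ring,
        show b + ((n:ℝ)+1) = b + (n:ℝ) + 1 by ring]
    have E1 : rdigamma (a+b+2*(n:ℝ)+1) = rdigamma (a+b+2*(n:ℝ)) + 1/(a+b+2*(n:ℝ)) :=
      rdigamma_add_one (by positivity)
    have E2 : rdigamma (a+b+2*(n:ℝ)+1+1) = rdigamma (a+b+2*(n:ℝ)+1) + 1/(a+b+2*(n:ℝ)+1) :=
      rdigamma_add_one (by positivity)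
    have E3 : rdigamma (a+(n:ℝ)+1) = rdigamma (a+(n:ℝ)) + 1/(a+(n:ℝ)) :=
      rdigamma_add_one (by positivity)
    have E4 : rdigamma (a+b+(n:ℝ)+1) = rdigamma (a+b+(n:ℝ)) + 1/(a+b+(n:ℝ)) :=
      rdigamma_add_one (by positivity)
    have E5 : rdigamma (b+(n:ℝ)+1+1) = rdigamma (b+(n:ℝ)+1) + 1/(b+(n:ℝ)+1) :=
      rdigamma_add_one (by positivity)
    have E6 : rdigamma (a/2+b/2+(n:ℝ)+1) = rdigamma (a/2+b/2+(n:ℝ)) + 1/(a/2+b/2+(n:ℝ)) :=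
      rdigamma_add_one (by positivity)
    have E7 : rdigamma (b+1) = rdigamma b + 1/b := rdigamma_add_one hb
    have E8 : rdigamma (a+b+(n:ℝ)+(n:ℝ)+1) = rdigamma (a+b+2*(n:ℝ)) + 1/(a+b+2*(n:ℝ)) := by
      rw [show a+b+(n:ℝ)+(n:ℝ)+1 = a+b+2*(n:ℝ)+1 by ring]; exact E1
    rw [E2, E8, E5, E6, E7, E4, E3, E1]
    have d1 : b ≠ 0 := hb.ne'
    have d2 : a + (n:ℝ) ≠ 0 := by positivity
    have d3 : a + (n:ℝ) + 1 ≠ 0 := by positivity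
    have d4 : b + (n:ℝ) + 1 ≠ 0 := by positivity
    have d5 : a + b + (n:ℝ) ≠ 0 := by positivity
    have d6 : a + b + 2*(n:ℝ) ≠ 0 := by positivity
    have d7 : a + b + 2*(n:ℝ) + 1 ≠ 0 := by positivity
    have d8 : a / 2 + b / 2 + (n:ℝ) ≠ 0 := by positivity
    have hQ : (a+b+(n:ℝ)) * (1/(b*(a+(n:ℝ)))) - 1/(a+(n:ℝ)) + 1/(a+(n:ℝ)+1)
        = (a+b+(n:ℝ)+1) * (1/(b*(a+(n:ℝ)+1))) := by
      field_simp
      ring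
    have hC : 1/(a+(n:ℝ)) * (1/b) + 1/(a+(n:ℝ)) * (1/(a+b+2*(n:ℝ)))
          - 1/(a+(n:ℝ)) * (1/(a+b+(n:ℝ))) + 1/(a+b+(n:ℝ)) / (a+(n:ℝ)+1)
          + 1/(a/2+b/2+(n:ℝ)) / (b-a)
          - (a+b+(n:ℝ)+1) * (1/(a+b+(n:ℝ))) / (b*(a+(n:ℝ)+1))
          - 1/(a+(n:ℝ)) * (1/(b-a)) = 0 := by
      field_simp
      ring
    linear_combination (-(rdigamma (a+b+(n:ℝ)))) * hQ - hC
end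

section
/- Let m be a positive integer and let a, b be real numbers with a ≥ 0 and b ≥ 0. Then Σ_{i=1}^m ψ₀(i)/(Γ(i)·Γ(a+i)·Γ(m−i+1)·Γ(b−i+m+1)) = −(1/(Γ(m)·Γ(b+m)·Γ(a+b+m))) · Σ_{i=1}^{m−1} Γ(a+b−i+2m−1)/(Γ(a−i+m)·i) + ψ₀(m)·Γ(a+b+2m−1)/(Γ(m)·Γ(a+m)·Γ(b+m)·Γ(a+b+m)). -/
open Real Finset

noncomputable def gv (m : ℕ) (a b : ℝ) (i : ℕ) : ℝ :=
  1 / (Real.Gamma i * Real.Gamma (a + i) * Real.Gamma ((m : ℝ) - i + 1)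
    * Real.Gamma (b - i + m + 1))

noncomputable def Ssum (m : ℕ) (a b : ℝ) : ℝ :=
  ∑ j ∈ range (m-1), Real.Gamma (a + b - (j+1) + 2*m - 1)
    / (Real.Gamma (a - (j+1) + m) * (j+1))

noncomputable def Rhs (m : ℕ) (a b : ℝ) : ℝ :=
  -(1 / (Real.Gamma m * Real.Gamma (b+m) * Real.Gamma (a+b+m))) * Ssum m a b
  + rdigamma m * Real.Gamma (a+b+2*m-1)
    / (Real.Gamma m * Real.Gamma (a+m) * Real.Gamma (b+m) * Real.Gamma (a+b+m))

lemma gv_top (m : ℕ) (a b : ℝ) : gv m a b (m+1) = 0 := by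
  simp only [gv]
  rw [show (m:ℝ) - (↑(m+1):ℝ) + 1 = 0 by push_cast; ring, Real.Gamma_zero]
  simp

lemma gv_zero (m : ℕ) (a b : ℝ) : gv m a b 0 = 0 := by
  simp [gv, Real.Gamma_zero]

lemma pascal (m k : ℕ) (hm : 1 ≤ m) (hk : k ≤ m) (a b : ℝ) (ha : 0 ≤ a) (hb : 0 ≤ b) :
    gv (m+1) a b (k+1) = 1/(m:ℝ) * (gv m a (b+1) (k+1) + gv m (a+1) b k) := by
  have hM : (1:ℝ) ≤ (m:ℝ) := by exact_mod_cast hm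
  have hM0 : (m:ℝ) ≠ 0 := by linarith
  simp only [gv]
  push_cast
  rcases Nat.eq_zero_or_pos k with hk0 | hk1
  · subst hk0
    norm_num
    rw [Real.Gamma_add_one hM0]
    have h1 : Real.Gamma (a+1) ≠ 0 := (Real.Gamma_pos_of_pos (by linarith)).ne'
    have h2 : Real.Gamma (b+(m:ℝ)+1) ≠ 0 := (Real.Gamma_pos_of_pos (by linarith)).ne'
    have h3 : Real.Gamma (m:ℝ) ≠ 0 := (Real.Gamma_pos_of_pos (by linarith)).ne'
    field_simp
  · rcases eq_or_lt_of_le hk with hkm | hkm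
    · subst hkm
      rw [show ((k:ℝ)+1) - ((k:ℝ)+1) + 1 = 1 by ring,
        show (k:ℝ) - ((k:ℝ)+1) + 1 = 0 by ring, Real.Gamma_zero,
        show b - ((k:ℝ)+1) + ((k:ℝ)+1) + 1 = b + 1 by ring,
        show (k:ℝ) - (k:ℝ) + 1 = 1 by ring,
        show b - (k:ℝ) + (k:ℝ) + 1 = b + 1 by ring,
        Real.Gamma_add_one hM0,
        show a + ((k:ℝ)+1) = (a + (k:ℝ)) + 1 by ring,
        show a + 1 + (k:ℝ) = (a + (k:ℝ)) + 1 by ring,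
        Real.Gamma_one]
      rw [Real.Gamma_add_one (by linarith : a + (k:ℝ) ≠ 0)]
      have h1 : Real.Gamma (a+(k:ℝ)) ≠ 0 := (Real.Gamma_pos_of_pos (by linarith)).ne'
      have h2 : Real.Gamma (b+1) ≠ 0 := (Real.Gamma_pos_of_pos (by linarith)).ne'
      have h3 : Real.Gamma (k:ℝ) ≠ 0 := (Real.Gamma_pos_of_pos (by linarith)).ne'
      field_simp
      ring
    · -- 1 ≤ k, k + 1 ≤ m
      have hK : (1:ℝ) ≤ (k:ℝ) := by exact_mod_cast hk1
      have hKM : (k:ℝ) + 1 ≤ (m:ℝ) := by exact_mod_cast hkm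
      have hK0 : (k:ℝ) ≠ 0 := by linarith
      have hMK0 : (m:ℝ) - (k:ℝ) ≠ 0 := by linarith
      rw [show ((m:ℝ)+1) - ((k:ℝ)+1) + 1 = ((m:ℝ)-(k:ℝ)) + 1 by ring,
        Real.Gamma_add_one hMK0,
        show b - ((k:ℝ)+1) + ((m:ℝ)+1) + 1 = b - (k:ℝ) + (m:ℝ) + 1 by ring,
        show (m:ℝ) - ((k:ℝ)+1) + 1 = (m:ℝ) - (k:ℝ) by ring,
        show b + 1 - ((k:ℝ)+1) + (m:ℝ) + 1 = b - (k:ℝ) + (m:ℝ) + 1 by ring,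
        show a + ((k:ℝ)+1) = (a + 1) + (k:ℝ) by ring,
        Real.Gamma_add_one hK0]
      have h1 : Real.Gamma (a+1+(k:ℝ)) ≠ 0 := (Real.Gamma_pos_of_pos (by linarith)).ne'
      have h2 : Real.Gamma (b-(k:ℝ)+(m:ℝ)+1) ≠ 0 :=
        (Real.Gamma_pos_of_pos (by linarith)).ne'
      have h3 : Real.Gamma (k:ℝ) ≠ 0 := (Real.Gamma_pos_of_pos (by linarith)).ne'
      have h4 : Real.Gamma ((m:ℝ)-(k:ℝ)) ≠ 0 := (Real.Gamma_pos_of_pos (by linarith)).ne'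
      field_simp
      ring

lemma sum_pascal (m : ℕ) (hm : 1 ≤ m) (a b : ℝ) (ha : 0 ≤ a) (hb : 0 ≤ b) :
    ∑ k ∈ range (m+1), gv (m+1) a b (k+1)
    = 1/(m:ℝ) * ((∑ k ∈ range m, gv m a (b+1) (k+1))
        + ∑ k ∈ range m, gv m (a+1) b (k+1)) := by
  have h : ∀ k ∈ range (m+1), gv (m+1) a b (k+1)
      = 1/(m:ℝ) * (gv m a (b+1) (k+1) + gv m (a+1) b k) :=
    fun k hk => pascal m k hm (Nat.lt_succ_iff.mp (mem_range.mp hk)) a b ha hb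
  rw [Finset.sum_congr rfl h, ← Finset.mul_sum, Finset.sum_add_distrib,
    Finset.sum_range_succ (fun k => gv m a (b+1) (k+1)) m, gv_top, add_zero,
    Finset.sum_range_succ' (fun k => gv m (a+1) b k) m, gv_zero, add_zero]

lemma vandermonde : ∀ m : ℕ, 1 ≤ m → ∀ a b : ℝ, 0 ≤ a → 0 ≤ b →
    ∑ k ∈ range m, gv m a b (k+1)
    = Real.Gamma (a+b+2*m-1)
      / (Real.Gamma m * Real.Gamma (a+m) * Real.Gamma (b+m) * Real.Gamma (a+b+m)) := by
  intro m hm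
  induction m, hm using Nat.le_induction with
  | base =>
    intro a b ha hb
    have h1 : Real.Gamma (a+b+1) ≠ 0 := (Real.Gamma_pos_of_pos (by linarith)).ne'
    simp only [gv, Finset.sum_range_one]
    norm_num [Real.Gamma_one]
    rw [show a+b+2-1 = a+b+1 by ring]
    field_simp
  | succ n hn ih =>
    intro a b ha hb
    rw [sum_pascal n hn a b ha hb, ih a (b+1) ha (by linarith), ih (a+1) b (by linarith) hb]
    have hN : (1:ℝ) ≤ (n:ℝ) := by exact_mod_cast hn
    push_cast
    rw [show a+(b+1)+2*(n:ℝ)-1 = a+b+2*(n:ℝ) by ring,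
      show a+1+b+2*(n:ℝ)-1 = a+b+2*(n:ℝ) by ring,
      show a+b+2*((n:ℝ)+1)-1 = (a+b+2*(n:ℝ))+1 by ring,
      show a+(b+1)+(n:ℝ) = (a+b+(n:ℝ))+1 by ring,
      show a+1+b+(n:ℝ) = (a+b+(n:ℝ))+1 by ring,
      show b+1+(n:ℝ) = (b+(n:ℝ))+1 by ring,
      show a+1+(n:ℝ) = (a+(n:ℝ))+1 by ring,
      show a+((n:ℝ)+1) = (a+(n:ℝ))+1 by ring,
      show b+((n:ℝ)+1) = (b+(n:ℝ))+1 by ring,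
      show a+b+((n:ℝ)+1) = (a+b+(n:ℝ))+1 by ring,
      Real.Gamma_add_one (by linarith : a+b+2*(n:ℝ) ≠ 0),
      Real.Gamma_add_one (by linarith : (n:ℝ) ≠ 0),
      Real.Gamma_add_one (by linarith : a+(n:ℝ) ≠ 0),
      Real.Gamma_add_one (by linarith : b+(n:ℝ) ≠ 0),
      Real.Gamma_add_one (by linarith : a+b+(n:ℝ) ≠ 0)]
    have g1 : Real.Gamma (n:ℝ) ≠ 0 := (Real.Gamma_pos_of_pos (by linarith)).ne'
    have g2 : Real.Gamma (a+(n:ℝ)) ≠ 0 := (Real.Gamma_pos_of_pos (by linarith)).ne'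
    have g3 : Real.Gamma (b+(n:ℝ)) ≠ 0 := (Real.Gamma_pos_of_pos (by linarith)).ne'
    have g4 : Real.Gamma (a+b+(n:ℝ)) ≠ 0 := (Real.Gamma_pos_of_pos (by linarith)).ne'
    have g5 : Real.Gamma (a+b+2*(n:ℝ)) ≠ 0 := (Real.Gamma_pos_of_pos (by linarith)).ne'
    have hx1 : a+(n:ℝ) ≠ 0 := by linarith
    have hx2 : b+(n:ℝ) ≠ 0 := by linarith
    have hx3 : a+b+(n:ℝ) ≠ 0 := by linarith
    have hx4 : (n:ℝ) ≠ 0 := by linarith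
    field_simp
    ring

lemma shift_term (n k : ℕ) (a b : ℝ) :
    1/((k:ℝ)+1) * gv n (a+1) b (k+1) = gv (n+1) a b (k+2) := by
  simp only [gv]
  push_cast
  rw [show a + ((k:ℝ)+2) = a + 1 + ((k:ℝ)+1) by ring,
    show (n:ℝ)+1 - ((k:ℝ)+2) + 1 = (n:ℝ) - ((k:ℝ)+1) + 1 by ring,
    show b - ((k:ℝ)+2) + ((n:ℝ)+1) + 1 = b - ((k:ℝ)+1) + (n:ℝ) + 1 by ring,
    show (k:ℝ)+2 = ((k:ℝ)+1)+1 by ring,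
    Real.Gamma_add_one (by positivity : (k:ℝ)+1 ≠ 0)]
  rw [div_mul_div_comm, one_mul]
  congr 1
  ring

lemma weighted_sum_pascal (n : ℕ) (hn : 1 ≤ n) (a b : ℝ) (ha : 0 ≤ a) (hb : 0 ≤ b) :
    ∑ k ∈ range (n+1), rdigamma (↑(k+1)) * gv (n+1) a b (k+1)
    = 1/(n:ℝ) * ((∑ k ∈ range n, rdigamma (↑(k+1)) * gv n a (b+1) (k+1))
        + (∑ k ∈ range n, rdigamma (↑(k+1)) * gv n (a+1) b (k+1))
        + ∑ k ∈ range n, gv (n+1) a b (k+2)) := by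
  have h1 : ∀ k ∈ range (n+1), rdigamma (↑(k+1)) * gv (n+1) a b (k+1)
      = 1/(n:ℝ) * (rdigamma (↑(k+1)) * gv n a (b+1) (k+1)
          + rdigamma (↑(k+1)) * gv n (a+1) b k) := by
    intro k hk
    rw [pascal n k hn (Nat.lt_succ_iff.mp (mem_range.mp hk)) a b ha hb]
    ring
  rw [Finset.sum_congr rfl h1, ← Finset.mul_sum, Finset.sum_add_distrib]
  congr 1
  rw [Finset.sum_range_succ (fun k => rdigamma (↑(k+1)) * gv n a (b+1) (k+1)) n,
    gv_top, mul_zero, add_zero,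
    Finset.sum_range_succ' (fun k => rdigamma (↑(k+1)) * gv n (a+1) b k) n,
    gv_zero, mul_zero, add_zero]
  rw [add_assoc]
  congr 1
  rw [← Finset.sum_add_distrib]
  refine Finset.sum_congr rfl fun k hk => ?_
  have hcast : ((k+1+1 : ℕ) : ℝ) = ((k+1 : ℕ) : ℝ) + 1 := by push_cast; ring
  rw [hcast, rdigamma_add_one (by positivity : (0:ℝ) < ((k+1:ℕ):ℝ)), add_mul,
    show ((k+1:ℕ):ℝ) = (k:ℝ)+1 by push_cast; ring, shift_term n k a b]

lemma Ssum_rec (n : ℕ) (hn : 1 ≤ n) (a b : ℝ) (ha : 0 ≤ a) (hb : 0 ≤ b) :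
    Ssum (n+1) a b = Ssum n a (b+1) + (b+(n:ℝ)) * Ssum n (a+1) b
      + Real.Gamma (a+b+(n:ℝ)+1) / ((n:ℝ) * Real.Gamma (a+1)) := by
  obtain ⟨p, rfl⟩ : ∃ p, n = p+1 := ⟨n-1, (Nat.succ_pred_eq_of_pos hn).symm⟩
  simp only [Ssum, Nat.add_sub_cancel]
  rw [Finset.sum_range_succ]
  have hlast : Real.Gamma (a + b - ((p:ℝ)+1) + 2*((p+1+1:ℕ):ℝ) - 1)
      / (Real.Gamma (a - ((p:ℝ)+1) + ((p+1+1:ℕ):ℝ)) * ((p:ℝ)+1))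
      = Real.Gamma (a+b+((p+1:ℕ):ℝ)+1) / (((p+1:ℕ):ℝ) * Real.Gamma (a+1)) := by
    push_cast
    rw [show a + b - ((p:ℝ)+1) + 2*((p:ℝ)+1+1) - 1 = a + b + ((p:ℝ)+1) + 1 by ring,
      show a - ((p:ℝ)+1) + ((p:ℝ)+1+1) = a + 1 by ring]
    ring
  push_cast
  push_cast at hlast
  rw [hlast]
  congr 1
  rw [Finset.mul_sum, ← Finset.sum_add_distrib]
  refine Finset.sum_congr rfl fun j hj => ?_
  have hj' : (j:ℝ) + 1 ≤ (p:ℝ) := by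
    have := mem_range.mp hj; exact_mod_cast Nat.succ_le_of_lt this
  have ht : a + ((p:ℝ)+1) - ((j:ℝ)+1) ≠ 0 := by linarith
  have hc : a + b + 2*((p:ℝ)+1) - ((j:ℝ)+1) ≠ 0 := by linarith
  rw [show a + b - ((j:ℝ)+1) + 2*((p:ℝ)+1+1) - 1
        = (a + b + 2*((p:ℝ)+1) - ((j:ℝ)+1)) + 1 by ring,
    Real.Gamma_add_one hc,
    show a - ((j:ℝ)+1) + ((p:ℝ)+1+1) = (a + ((p:ℝ)+1) - ((j:ℝ)+1)) + 1 by ring,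
    Real.Gamma_add_one ht,
    show a + (b+1) - ((j:ℝ)+1) + 2*((p:ℝ)+1) - 1
        = a + b + 2*((p:ℝ)+1) - ((j:ℝ)+1) by ring,
    show a - ((j:ℝ)+1) + ((p:ℝ)+1) = a + ((p:ℝ)+1) - ((j:ℝ)+1) by ring,
    show a + 1 + b - ((j:ℝ)+1) + 2*((p:ℝ)+1) - 1
        = a + b + 2*((p:ℝ)+1) - ((j:ℝ)+1) by ring,
    show a + 1 - ((j:ℝ)+1) + ((p:ℝ)+1) = (a + ((p:ℝ)+1) - ((j:ℝ)+1)) + 1 by ring,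
    Real.Gamma_add_one ht]
  have hG : Real.Gamma (a + ((p:ℝ)+1) - ((j:ℝ)+1)) ≠ 0 :=
    (Real.Gamma_pos_of_pos (by linarith)).ne'
  have hJ : ((j:ℝ)+1) ≠ 0 := by positivity
  field_simp
  ring

lemma main_aux : ∀ m : ℕ, 1 ≤ m → ∀ a b : ℝ, 0 ≤ a → 0 ≤ b →
    ∑ k ∈ range m, rdigamma (↑(k+1)) * gv m a b (k+1) = Rhs m a b := by
  intro m hm
  induction m, hm using Nat.le_induction with
  | base =>
    intro a b ha hb
    have h1 : Real.Gamma (a+b+1) ≠ 0 := (Real.Gamma_pos_of_pos (by linarith)).ne'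
    have h2 : Real.Gamma (a+1) ≠ 0 := (Real.Gamma_pos_of_pos (by linarith)).ne'
    have h3 : Real.Gamma (b+1) ≠ 0 := (Real.Gamma_pos_of_pos (by linarith)).ne'
    simp only [Rhs, Ssum, gv, Finset.sum_range_one]
    norm_num [Real.Gamma_one]
    rw [show a+b+2-1 = a+b+1 by ring]
    field_simp
  | succ n hn ih =>
    intro a b ha hb
    have hN : (1:ℝ) ≤ (n:ℝ) := by exact_mod_cast hn
    -- the shifted-vandermonde sum
    have hT : ∑ k ∈ range n, gv (n+1) a b (k+2)
        = Real.Gamma (a+b+2*((n+1:ℕ):ℝ)-1)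
          / (Real.Gamma ((n+1:ℕ):ℝ) * Real.Gamma (a+((n+1:ℕ):ℝ))
            * Real.Gamma (b+((n+1:ℕ):ℝ)) * Real.Gamma (a+b+((n+1:ℕ):ℝ)))
          - 1 / (Real.Gamma (a+1) * Real.Gamma ((n:ℝ)+1) * Real.Gamma (b+(n:ℝ)+1)) := by
      have hv := vandermonde (n+1) (by omega) a b ha hb
      have hsplit := Finset.sum_range_succ' (fun k => gv (n+1) a b (k+1)) n
      rw [hsplit] at hv
      have hg1 : gv (n+1) a b (0+1)
          = 1 / (Real.Gamma (a+1) * Real.Gamma ((n:ℝ)+1) * Real.Gamma (b+(n:ℝ)+1)) := by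
        simp only [gv]
        push_cast
        norm_num [Real.Gamma_one]
      rw [hg1] at hv
      linarith [hv]
    rw [weighted_sum_pascal n hn a b ha hb, ih a (b+1) ha (by linarith),
      ih (a+1) b (by linarith) hb, hT]
    -- now pure algebra
    simp only [Rhs]
    rw [Ssum_rec n hn a b ha hb]
    push_cast
    rw [show ((n:ℝ)+1) = (n:ℝ)+1 from rfl]
    rw [rdigamma_add_one (by linarith : (0:ℝ) < (n:ℝ))]
    rw [show a+(b+1)+2*(n:ℝ)-1 = a+b+2*(n:ℝ) by ring,
      show a+1+b+2*(n:ℝ)-1 = a+b+2*(n:ℝ) by ring,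
      show a+b+2*((n:ℝ)+1)-1 = (a+b+2*(n:ℝ))+1 by ring,
      show a+(b+1)+(n:ℝ) = (a+b+(n:ℝ))+1 by ring,
      show a+1+b+(n:ℝ) = (a+b+(n:ℝ))+1 by ring,
      show b+1+(n:ℝ) = (b+(n:ℝ))+1 by ring,
      show a+1+(n:ℝ) = (a+(n:ℝ))+1 by ring,
      show a+((n:ℝ)+1) = (a+(n:ℝ))+1 by ring,
      show b+((n:ℝ)+1) = (b+(n:ℝ))+1 by ring,
      show b+(n:ℝ)+1 = (b+(n:ℝ))+1 by ring,
      show a+b+((n:ℝ)+1) = (a+b+(n:ℝ))+1 by ring,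
      show a+b+(n:ℝ)+1 = (a+b+(n:ℝ))+1 by ring,
      Real.Gamma_add_one (by linarith : a+b+2*(n:ℝ) ≠ 0),
      Real.Gamma_add_one (by linarith : (n:ℝ) ≠ 0),
      Real.Gamma_add_one (by linarith : a+(n:ℝ) ≠ 0),
      Real.Gamma_add_one (by linarith : b+(n:ℝ) ≠ 0),
      Real.Gamma_add_one (by linarith : a+b+(n:ℝ) ≠ 0)]
    have g1 : Real.Gamma (n:ℝ) ≠ 0 := (Real.Gamma_pos_of_pos (by linarith)).ne'
    have g2 : Real.Gamma (a+(n:ℝ)) ≠ 0 := (Real.Gamma_pos_of_pos (by linarith)).ne'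
    have g3 : Real.Gamma (b+(n:ℝ)) ≠ 0 := (Real.Gamma_pos_of_pos (by linarith)).ne'
    have g4 : Real.Gamma (a+b+(n:ℝ)) ≠ 0 := (Real.Gamma_pos_of_pos (by linarith)).ne'
    have g5 : Real.Gamma (a+b+2*(n:ℝ)) ≠ 0 := (Real.Gamma_pos_of_pos (by linarith)).ne'
    have g6 : Real.Gamma (a+1) ≠ 0 := (Real.Gamma_pos_of_pos (by linarith)).ne'
    have hx1 : a+(n:ℝ) ≠ 0 := by linarith
    have hx2 : b+(n:ℝ) ≠ 0 := by linarith
    have hx3 : a+b+(n:ℝ) ≠ 0 := by linarith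
    have hx4 : (n:ℝ) ≠ 0 := by linarith
    field_simp
    ring

theorem gamma_weighted_digamma_sum (m : ℕ) (hm : 1 ≤ m) (a b : ℝ)
    (ha : 0 ≤ a) (hb : 0 ≤ b) :
    ∑ i ∈ Finset.Icc 1 m,
        rdigamma i / (Real.Gamma i * Real.Gamma (a + i) * Real.Gamma ((m : ℝ) - i + 1)
          * Real.Gamma (b - i + m + 1)) =
      -(1 / (Real.Gamma m * Real.Gamma (b + m) * Real.Gamma (a + b + m))) *
          ∑ i ∈ Finset.Icc 1 (m - 1),
            Real.Gamma (a + b - i + 2 * m - 1) / (Real.Gamma (a - i + m) * i)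
        + rdigamma m * Real.Gamma (a + b + 2 * m - 1)
          / (Real.Gamma m * Real.Gamma (a + m) * Real.Gamma (b + m)
            * Real.Gamma (a + b + m)) := by
  have h1 : ∑ i ∈ Finset.Icc 1 m,
      rdigamma i / (Real.Gamma i * Real.Gamma (a + i) * Real.Gamma ((m : ℝ) - i + 1)
        * Real.Gamma (b - i + m + 1))
      = ∑ k ∈ range m, rdigamma (↑(k+1)) * gv m a b (k+1) := by
    rw [← Finset.Ico_add_one_right_eq_Icc, Finset.sum_Ico_eq_sum_range]
    simp only [Nat.add_sub_cancel, gv]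
    refine Finset.sum_congr rfl fun k hk => ?_
    rw [Nat.add_comm 1 k]
    rw [div_eq_mul_one_div]
  have h2 : ∑ i ∈ Finset.Icc 1 (m-1),
      Real.Gamma (a + b - i + 2 * m - 1) / (Real.Gamma (a - i + m) * i)
      = Ssum m a b := by
    rw [← Finset.Ico_add_one_right_eq_Icc, Finset.sum_Ico_eq_sum_range, Ssum]
    simp only [Nat.add_sub_cancel]
    refine Finset.sum_congr rfl fun j hj => ?_
    rw [Nat.add_comm 1 j]
    push_cast
    ring_nf
  rw [h1, h2, main_aux m hm a b ha hb, Rhs]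
end
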